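/- arXiv:2310.07318 — 7 statements merged into one kernel-verified Lean document; each statement's English description precedes it below -/
import Mathlib

section
/- For all complex numbers x, t with real parts at least -ε and imaginary parts in [-ε, ε], where ε is sufficiently small (e.g. ε < (1/4)·log 3), the quantity |e^{x/2}·e^{t/2} / (e^x + e^t - 1)| is bounded by a constant independent of x, t, and ε. -/
open Complex Real

/-- The region `D_ε = {α ∈ ℂ : -ε ≤ Im α ≤ ε, -ε ≤ Re α}`. -/
def Deps (ε : ℝ) : Set ℂ := {α : ℂ | -ε ≤ α.im ∧ α.im ≤ ε ∧ -ε ≤ α.re}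

/-!
Write `s = |e^{x/2} e^{t/2}|` and `c = cos ε`. Since `|Im x|, |Im t| ≤ ε`, the real part of the
denominator is at least `c (|e^x| + |e^t|) - 1 ≥ 2 c s - 1` by AM-GM, while `Re x, Re t ≥ -ε`
gives `e^ε s ≥ 1`. Hence the denominator is at least `s (2c - e^ε)`, and the quotient is at most
`1 / (2 cos ε - e^ε)`, which stays `≤ 2` as long as `e^{4ε} < 3`.
-/

lemma Complex.norm_exp_mul_cos_le_re_exp {z : ℂ} {δ : ℝ} (hδ : δ ≤ π) (him : |z.im| ≤ δ) :
    ‖exp z‖ * Real.cos δ ≤ (exp z).re := by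
  rw [Complex.norm_exp, Complex.exp_re, ← Real.cos_abs z.im]
  exact mul_le_mul_of_nonneg_left
    (Real.cos_le_cos_of_nonneg_of_le_pi (abs_nonneg _) hδ him) (Real.exp_pos _).le

lemma Complex.two_mul_cos_mul_norm_sub_one_le_norm_exp_add_exp_sub_one {x t : ℂ} {δ : ℝ}
    (hδ : δ ≤ π) (hcos : 0 ≤ Real.cos δ) (hx : |x.im| ≤ δ) (ht : |t.im| ≤ δ) :
    2 * Real.cos δ * ‖exp (x / 2) * exp (t / 2)‖ - 1 ≤ ‖exp x + exp t - 1‖ := by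
  have hsq (z : ℂ) : ‖exp z‖ = ‖exp (z / 2)‖ ^ 2 := by
    rw [← norm_pow, ← Complex.exp_nat_mul]
    ring_nf
  have hre : (exp x + exp t - 1).re = (exp x).re + (exp t).re - 1 := by simp
  have hamgm := two_mul_le_add_sq ‖exp (x / 2)‖ ‖exp (t / 2)‖
  calc 2 * Real.cos δ * ‖exp (x / 2) * exp (t / 2)‖ - 1
      ≤ (‖exp x‖ + ‖exp t‖) * Real.cos δ - 1 := by
        rw [norm_mul, hsq x, hsq t]
        nlinarith
    _ ≤ (exp x + exp t - 1).re := by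
        rw [hre]
        linarith [norm_exp_mul_cos_le_re_exp hδ hx, norm_exp_mul_cos_le_re_exp hδ ht]
    _ ≤ ‖exp x + exp t - 1‖ := Complex.re_le_norm _

lemma div_le_one_div_of_two_mul_mul_sub_one_le {s d c r : ℝ} (hs : 0 ≤ s)
    (hd : 2 * c * s - 1 ≤ d) (hrs : 1 ≤ r * s) (hcr : 0 < 2 * c - r) :
    s / d ≤ 1 / (2 * c - r) := by
  have hs_pos : 0 < s := lt_of_le_of_ne hs (by rintro rfl; rw [mul_zero] at hrs; linarith)
  have hd_ge : s * (2 * c - r) ≤ d := by linarith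
  have hd_pos : 0 < d := lt_of_lt_of_le (mul_pos hs_pos hcr) hd_ge
  rw [div_le_div_iff₀ hd_pos hcr]
  linarith

lemma Real.half_le_two_mul_cos_sub_exp {ε : ℝ} (hε : 0 ≤ ε) (h : Real.exp (4 * ε) < 3) :
    1 / 2 ≤ 2 * Real.cos ε - Real.exp ε := by
  have hpow : Real.exp ε ^ 4 < 3 := by rwa [← Real.exp_nat_mul, Nat.cast_ofNat]
  have hexp : Real.exp ε ≤ 1.32 := by
    by_contra! hgt
    have := pow_lt_pow_left₀ hgt (by norm_num) (by norm_num : 4 ≠ 0)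
    norm_num at this
    linarith
  have hε' : ε ≤ 0.32 := by linarith [Real.add_one_le_exp ε]
  nlinarith [Real.one_sub_sq_div_two_le_cos (x := ε)]

lemma exp_neg_le_norm_exp_half_mul_exp_half {ε : ℝ} {x t : ℂ} (hx : x ∈ Deps ε)
    (ht : t ∈ Deps ε) : Real.exp (-ε) ≤ ‖exp (x / 2) * exp (t / 2)‖ := by
  rw [norm_mul, Complex.norm_exp, Complex.norm_exp, ← Real.exp_add]
  refine Real.exp_le_exp.2 ?_
  simp only [Complex.div_ofNat_re]
  linarith [hx.2.2, ht.2.2]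

/-- For all `x, t ∈ D_ε` with `ε` sufficiently small (e.g. `ε < (1/4)·log 3`),
`|e^{x/2} e^{t/2} / (e^x + e^t - 1)|` is bounded by a constant independent of
`x`, `t` and `ε`. -/
theorem bounded_half_half :
    ∃ C : ℝ, ∀ ε : ℝ, 0 < ε → ε < (1/4) * Real.log 3 →
      ∀ x t : ℂ, x ∈ Deps ε → t ∈ Deps ε →
        ‖Complex.exp (x/2) * Complex.exp (t/2) /
          (Complex.exp x + Complex.exp t - 1)‖ ≤ C := by
  refine ⟨2, fun ε hε hε3 x t hx ht => ?_⟩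
  have hexp4 : Real.exp (4 * ε) < 3 := by
    rw [← Real.exp_log (by norm_num : (0 : ℝ) < 3)]
    exact Real.exp_lt_exp.2 (by linarith)
  have hgap := Real.half_le_two_mul_cos_sub_exp hε.le hexp4
  have hεπ : ε ≤ π := by
    linarith [Real.log_le_sub_one_of_pos (by norm_num : (0 : ℝ) < 3), Real.pi_gt_three]
  have hcos : 0 ≤ Real.cos ε := by linarith [Real.exp_pos ε]
  have hrs : 1 ≤ Real.exp ε * ‖exp (x / 2) * exp (t / 2)‖ := by
    calc 1 = Real.exp ε * Real.exp (-ε) := by rw [← Real.exp_add, add_neg_cancel, Real.exp_zero]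
      _ ≤ _ := mul_le_mul_of_nonneg_left
          (exp_neg_le_norm_exp_half_mul_exp_half hx ht) (Real.exp_pos ε).le
  rw [norm_div]
  calc ‖exp (x / 2) * exp (t / 2)‖ / ‖exp x + exp t - 1‖
      ≤ 1 / (2 * Real.cos ε - Real.exp ε) :=
        div_le_one_div_of_two_mul_mul_sub_one_le (norm_nonneg _)
          (Complex.two_mul_cos_mul_norm_sub_one_le_norm_exp_add_exp_sub_one hεπ hcos
            (abs_le.2 ⟨hx.1, hx.2.1⟩) (abs_le.2 ⟨ht.1, ht.2.1⟩)) hrs (by linarith)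
    _ ≤ 2 := by
        rw [div_le_iff₀ (by linarith)]
        linarith
end

section
/- For any integer r ≥ 1, sufficiently small ε > 0 (e.g. ε < (1/4)·log 3), and all x, t ∈ D_ε = {α ∈ ℂ : -ε ≤ Im(α) ≤ ε, -ε ≤ Re(α)}, the quantity |e^{((4r-1)/(4r))x}·e^{(1/(4r))t} / (e^x + e^t - 1)| is bounded by a constant that does not depend on ε, x, or t. -/
/-! Write `S = exp (Re x) + exp (Re t)`. Since `a, b ≥ 0` and `a + b = 1`, convexity of `exp`
bounds the numerator's modulus `exp (a Re x + b Re t)` by `S`. The real part of the denominator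
is at least `cos ε · S - 1`, and on `D_ε` we have `S ≥ 2 e^{-ε}`, so for small `ε` the ratio
`S / (cos ε · S - 1)` stays bounded. -/

open Complex Real

lemma norm_exp_mul_exp_le {a b : ℝ} (ha : 0 ≤ a) (hb : 0 ≤ b) (hab : a + b = 1) (x t : ℂ) :
    ‖exp (a * x) * exp (b * t)‖ ≤ a * Real.exp x.re + b * Real.exp t.re := by
  have hre : (a * x + b * t : ℂ).re = a * x.re + b * t.re := by simp
  rw [← Complex.exp_add, Complex.norm_exp, hre]
  simpa only [smul_eq_mul] using
    convexOn_exp.2 (Set.mem_univ x.re) (Set.mem_univ t.re) ha hb hab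

lemma cos_mul_sub_one_le_norm_exp_add_exp_sub_one {δ : ℝ} (hδ : δ ≤ π) {x t : ℂ}
    (hx : |x.im| ≤ δ) (ht : |t.im| ≤ δ) :
    Real.cos δ * (Real.exp x.re + Real.exp t.re) - 1 ≤ ‖exp x + exp t - 1‖ := by
  have hcos {z : ℂ} (hz : |z.im| ≤ δ) : Real.cos δ ≤ Real.cos z.im := by
    rw [← Real.cos_abs z.im]
    exact Real.cos_le_cos_of_nonneg_of_le_pi (abs_nonneg _) hδ hz
  have hre : (exp x + exp t - 1).re = Real.exp x.re * Real.cos x.im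
      + Real.exp t.re * Real.cos t.im - 1 := by
    simp [Complex.exp_re]
  have hx' := mul_le_mul_of_nonneg_left (hcos hx) (Real.exp_pos x.re).le
  have ht' := mul_le_mul_of_nonneg_left (hcos ht) (Real.exp_pos t.re).le
  linarith [Complex.re_le_norm (exp x + exp t - 1)]

lemma abs_im_le_of_mem_Deps {ε : ℝ} {α : ℂ} (hα : α ∈ Deps ε) : |α.im| ≤ ε :=
  abs_le.mpr ⟨hα.1, hα.2.1⟩

lemma one_sub_le_exp_re_of_mem_Deps {ε : ℝ} {α : ℂ} (hα : α ∈ Deps ε) :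
    1 - ε ≤ Real.exp α.re := by
  linarith [Real.add_one_le_exp (-ε), Real.exp_le_exp.mpr hα.2.2]

lemma norm_exp_mul_exp_div_le_six {a b : ℝ} (ha : 0 ≤ a) (hb : 0 ≤ b) (hab : a + b = 1)
    {ε : ℝ} (hε : ε ≤ 1 / 3) {x t : ℂ} (hx : x ∈ Deps ε) (ht : t ∈ Deps ε) :
    ‖exp (a * x) * exp (b * t) / (exp x + exp t - 1)‖ ≤ 6 := by
  set S := Real.exp x.re + Real.exp t.re
  have hS : 4 / 3 ≤ S := by
    linarith [one_sub_le_exp_re_of_mem_Deps hx, one_sub_le_exp_re_of_mem_Deps ht]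
  have hε0 : 0 ≤ ε := (abs_nonneg _).trans (abs_im_le_of_mem_Deps hx)
  have hcos : 17 / 18 ≤ Real.cos ε := by
    nlinarith [Real.one_sub_sq_div_two_le_cos (x := ε)]
  have hnum : ‖exp (a * x) * exp (b * t)‖ ≤ S := by
    have := norm_exp_mul_exp_le ha hb hab x t
    nlinarith [Real.exp_pos x.re, Real.exp_pos t.re]
  have hden : Real.cos ε * S - 1 ≤ ‖exp x + exp t - 1‖ :=
    cos_mul_sub_one_le_norm_exp_add_exp_sub_one (by linarith [Real.pi_gt_three])
      (abs_im_le_of_mem_Deps hx) (abs_im_le_of_mem_Deps ht)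
  have hden_pos : 0 < Real.cos ε * S - 1 := by nlinarith
  rw [norm_div, div_le_iff₀ (hden_pos.trans_le hden)]
  nlinarith

lemma log_three_lt_four_thirds : Real.log 3 < 4 / 3 := by
  rw [Real.log_lt_iff_lt_exp (by norm_num),
    show (4 / 3 : ℝ) = 1 + 1 / 3 by norm_num, Real.exp_add]
  nlinarith [Real.exp_one_gt_d9, Real.add_one_le_exp (1 / 3 : ℝ), Real.exp_pos 1]

/-- For every `r ≥ 1`, for all `x, t ∈ D_ε` with `ε` sufficiently small
(e.g. `ε < (1/4)·log 3`), the quantity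
`|e^{((4r-1)/(4r))x} e^{(1/(4r))t} / (e^x + e^t - 1)|` is bounded by a constant
independent of `ε`, `x`, `t`. -/
theorem bounded_4r :
    ∀ r : ℕ, 1 ≤ r → ∃ C : ℝ, ∀ ε : ℝ, 0 < ε → ε < (1/4) * Real.log 3 →
      ∀ x t : ℂ, x ∈ Deps ε → t ∈ Deps ε →
        ‖Complex.exp ((((4 * r - 1 : ℝ)) / (4 * r : ℝ)) * x) *
            Complex.exp (((1 : ℝ) / (4 * r : ℝ)) * t) /
          (Complex.exp x + Complex.exp t - 1)‖ ≤ C := by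
  intro r hr
  refine ⟨6, fun ε _ hε x t hx ht => ?_⟩
  have hr4 : (4 : ℝ) ≤ 4 * r := by
    have : (1 : ℝ) ≤ r := by exact_mod_cast hr
    linarith
  have hab : (4 * r - 1 : ℝ) / (4 * r) + 1 / (4 * r) = 1 := by
    field_simp
    ring
  rw [← Complex.ofReal_div, ← Complex.ofReal_div]
  exact norm_exp_mul_exp_div_le_six (div_nonneg (by linarith) (by linarith)) (by positivity)
    hab (by linarith [log_three_lt_four_thirds]) hx ht
end

section
/- For complex w = e^{x₁+ix₂} - 1/2 and y = e^{t₁+it₂} - 1/2 with x₁, t₁ ≥ -ε and |x₂|, |t₂| ≤ ε, where 0 < ε < (1/4)·log 3, the ratio (|w|+|y|)/(Re(w)+Re(y)) is bounded above by (1 + 3^{1/4}/2)/((√3 - 3^{1/4})/2). -/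
open Complex Real

/-! Writing `q = 3^{1/4} = e^{(log 3)/4}`, the condition `x₁ ≥ -ε > -(log 3)/4` gives
`1/2 ≤ (q/2)·e^{x₁}`, while `|x₂| ≤ ε < π/6` gives `cos x₂ ≥ √3/2`. Hence
`|w| ≤ e^{x₁} + 1/2 ≤ (1 + q/2)·e^{x₁}` and `Re w ≥ (√3/2)·e^{x₁} - 1/2 ≥ ((√3 - q)/2)·e^{x₁}`,
and likewise for `y`; adding the two bounds and dividing gives the ratio bound. -/

lemma div_le_div_of_le_mul_of_mul_le {n d c₁ c₂ s : ℝ} (hn : n ≤ c₁ * s) (hd : c₂ * s ≤ d)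
    (hc₁ : 0 ≤ c₁) (hc₂ : 0 < c₂) (hs : 0 < s) : n / d ≤ c₁ / c₂ := by
  have hd_pos : 0 < d := (mul_pos hc₂ hs).trans_le hd
  rw [div_le_div_iff₀ hd_pos hc₂]
  calc n * c₂ ≤ c₁ * s * c₂ := mul_le_mul_of_nonneg_right hn hc₂.le
    _ = c₁ * (c₂ * s) := by ring
    _ ≤ c₁ * d := mul_le_mul_of_nonneg_left hd hc₁

lemma one_le_rpow_mul_exp {b r x : ℝ} (hb : 0 < b) (hx : -(r * Real.log b) ≤ x) :
    1 ≤ b ^ r * Real.exp x := by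
  rw [Real.rpow_def_of_pos hb, ← Real.exp_add]
  exact Real.one_le_exp (by linarith)

lemma rpow_quarter_three_lt_sqrt_three : (3 : ℝ) ^ ((1 : ℝ) / 4) < Real.sqrt 3 := by
  rw [Real.sqrt_eq_rpow]
  exact Real.rpow_lt_rpow_of_exponent_lt (by norm_num) (by norm_num)

lemma quarter_log_three_lt_pi_div_six : 1 / 4 * Real.log 3 < π / 6 := by
  have hlog : Real.log 3 ≤ 3 - 1 := Real.log_le_sub_one_of_pos (by norm_num)
  linarith [Real.pi_gt_three]

lemma sqrt_three_div_two_le_cos {y : ℝ} (hy : |y| ≤ π / 6) : Real.sqrt 3 / 2 ≤ Real.cos y := by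
  rw [← Real.cos_abs, ← Real.cos_pi_div_six]
  exact Real.cos_le_cos_of_nonneg_of_le_pi (abs_nonneg y) (by linarith [Real.pi_pos]) hy

lemma norm_exp_sub_half_le_mul_exp {x y : ℝ} (hx : -(1 / 4 * Real.log 3) ≤ x) :
    ‖Complex.exp (x + y * I) - 1 / 2‖ ≤ (1 + (3 : ℝ) ^ ((1 : ℝ) / 4) / 2) * Real.exp x := by
  have hq := one_le_rpow_mul_exp (b := 3) (by norm_num) hx
  calc ‖Complex.exp (x + y * I) - 1 / 2‖
      ≤ ‖Complex.exp (x + y * I)‖ + ‖(1 / 2 : ℂ)‖ := norm_sub_le _ _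
    _ = Real.exp x + 1 / 2 := by simp [Complex.norm_exp]
    _ ≤ (1 + (3 : ℝ) ^ ((1 : ℝ) / 4) / 2) * Real.exp x := by linarith

lemma mul_exp_le_re_exp_sub_half {x y : ℝ} (hx : -(1 / 4 * Real.log 3) ≤ x)
    (hy : |y| ≤ π / 6) :
    (Real.sqrt 3 - (3 : ℝ) ^ ((1 : ℝ) / 4)) / 2 * Real.exp x ≤
      (Complex.exp (x + y * I) - 1 / 2).re := by
  have hq := one_le_rpow_mul_exp (b := 3) (by norm_num) hx
  have hre : (Complex.exp (x + y * I) - 1 / 2).re = Real.exp x * Real.cos y - 1 / 2 := by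
    simp [Complex.exp_re]
  have hcos : Real.sqrt 3 / 2 * Real.exp x ≤ Real.cos y * Real.exp x :=
    mul_le_mul_of_nonneg_right (sqrt_three_div_two_le_cos hy) (Real.exp_pos x).le
  rw [hre]
  linarith

theorem ratio_bound_general (ε : ℝ) (hε : ε < (1/4) * Real.log 3)
    (x₁ x₂ t₁ t₂ : ℝ) (hx₁ : -ε ≤ x₁) (hx₂ : |x₂| ≤ ε)
    (ht₁ : -ε ≤ t₁) (ht₂ : |t₂| ≤ ε) :
    (‖Complex.exp (x₁ + x₂ * Complex.I) - 1/2‖ +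
        ‖Complex.exp (t₁ + t₂ * Complex.I) - 1/2‖) /
      ((Complex.exp (x₁ + x₂ * Complex.I) - 1/2).re +
        (Complex.exp (t₁ + t₂ * Complex.I) - 1/2).re) ≤
      (1 + (3 : ℝ) ^ ((1 : ℝ)/4) / 2) / ((Real.sqrt 3 - (3 : ℝ) ^ ((1 : ℝ)/4)) / 2) := by
  have hx : -(1 / 4 * Real.log 3) ≤ x₁ := by linarith
  have ht : -(1 / 4 * Real.log 3) ≤ t₁ := by linarith
  have hε_pi : ε ≤ π / 6 := (hε.trans quarter_log_three_lt_pi_div_six).le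
  refine div_le_div_of_le_mul_of_mul_le (s := Real.exp x₁ + Real.exp t₁) ?_ ?_
    (by positivity) (by linarith [rpow_quarter_three_lt_sqrt_three]) (by positivity)
  · rw [mul_add]
    exact add_le_add (norm_exp_sub_half_le_mul_exp hx) (norm_exp_sub_half_le_mul_exp ht)
  · rw [mul_add]
    exact add_le_add (mul_exp_le_re_exp_sub_half hx (hx₂.trans hε_pi))
      (mul_exp_le_re_exp_sub_half ht (ht₂.trans hε_pi))

/-- For `w = e^{x₁+ix₂} - 1/2`, `y = e^{t₁+it₂} - 1/2` with `x₁, t₁ ≥ -ε`,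
`|x₂|, |t₂| ≤ ε` and `0 < ε < (1/4)·log 3`, the ratio
`(|w|+|y|)/(Re w + Re y)` is bounded by `(1 + 3^{1/4}/2)/((√3 - 3^{1/4})/2)`. -/
theorem ratio_bound (ε : ℝ) (hε0 : 0 < ε) (hε : ε < (1/4) * Real.log 3)
    (x₁ x₂ t₁ t₂ : ℝ) (hx₁ : -ε ≤ x₁) (hx₂ : |x₂| ≤ ε)
    (ht₁ : -ε ≤ t₁) (ht₂ : |t₂| ≤ ε) :
    (‖Complex.exp (x₁ + x₂ * Complex.I) - 1/2‖ +
        ‖Complex.exp (t₁ + t₂ * Complex.I) - 1/2‖) /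
      ((Complex.exp (x₁ + x₂ * Complex.I) - 1/2).re +
        (Complex.exp (t₁ + t₂ * Complex.I) - 1/2).re) ≤
      (1 + (3 : ℝ) ^ ((1 : ℝ)/4) / 2) / ((Real.sqrt 3 - (3 : ℝ) ^ ((1 : ℝ)/4)) / 2) :=
  ratio_bound_general ε hε x₁ x₂ t₁ t₂ hx₁ hx₂ ht₁ ht₂
end

section
/- The single-variable Arakawa–Kaneko eta function satisfies the duality η(k; n) = η(n; k) for all positive integers k and n, where η(k; s) = (1/Γ(s)) ∫₀^∞ t^{s-1} Li_k(1-e^t)/(1-e^t) dt. -/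
open MeasureTheory

/-- The polylogarithm `Li_k` on `(-∞, 0]` (the analytic continuation of the
series `Σ_{m≥1} z^m/m^k` to negative real arguments), defined recursively by
`Li_0(x) = x/(1-x)` and `Li_{k+1}(x) = ∫_0^x Li_k(u)/u du`
(so `Li_1(x) = -log(1-x)`). -/
noncomputable def Li : ℕ → ℝ → ℝ
  | 0, x => x / (1 - x)
  | (k+1), x => ∫ u in (0 : ℝ)..x, Li k u / u

/-- The Arakawa–Kaneko type eta function at a positive integer argument:
`η(k; n) = (1/Γ(n)) ∫_0^∞ t^{n-1} Li_k(1-e^t)/(1-e^t) dt`, with `Γ(n) = (n-1)!`. -/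
noncomputable def eta (k n : ℕ) : ℝ :=
  (1 / (Nat.factorial (n - 1) : ℝ)) *
    ∫ t in Set.Ioi (0 : ℝ), t ^ (n - 1) * Li k (1 - Real.exp t) / (1 - Real.exp t)

/-!
For `z ≤ 0` the polylogarithm has the integral representation
`Li_{k+1}(z) = z / k! * ∫_0^∞ x^k / (e^x - z) dx`. It follows by induction on `k`: integrating the
representation of `Li_{k+1}(u) / u` over `u ∈ (z, 0]` and swapping the integrals produces
`∫_0^∞ x^k log(1 - z e^{-x}) dx`, and an integration by parts in `x` turns this into the
representation of `Li_{k+2}(z)`.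

With `z = 1 - e^t`, the kernel `1 / (e^x - z) = 1 / (e^x + e^t - 1)` is symmetric in `x` and `t`, so
`a! b! η(a+1; b+1) = ∫_0^∞ ∫_0^∞ t^b x^a / (e^x + e^t - 1) dx dt`, and Fubini gives the duality.
-/

open Real Set Filter Topology
open scoped Nat Interval

lemma integrableOn_pow_mul_exp_neg_mul (m : ℕ) {c : ℝ} (hc : 0 < c) :
    IntegrableOn (fun x : ℝ => x ^ m * exp (-(c * x))) (Ioi 0) := by
  refine (integrableOn_rpow_mul_exp_neg_mul_rpow (s := m) (p := 1)
    (by linarith [m.cast_nonneg (α := ℝ)]) one_pos hc).congr_fun (fun x _ => ?_) measurableSet_Ioi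
  simp [Real.rpow_natCast]

lemma integrableOn_pow_mul_exp_neg (m : ℕ) :
    IntegrableOn (fun x : ℝ => x ^ m * exp (-x)) (Ioi 0) := by
  simpa using integrableOn_pow_mul_exp_neg_mul m one_pos

lemma pow_div_exp_sub_le (k : ℕ) {u x : ℝ} (hu : u ≤ 0) (hx : 0 ≤ x) :
    x ^ k / (exp x - u) ≤ x ^ k * exp (-x) := by
  rw [exp_neg, ← div_eq_mul_inv]
  exact div_le_div_of_nonneg_left (by positivity) (exp_pos x) (by linarith)

lemma integrableOn_pow_div_exp_sub (k : ℕ) {z : ℝ} (hz : z ≤ 0) :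
    IntegrableOn (fun x : ℝ => x ^ k / (exp x - z)) (Ioi 0) := by
  refine (integrableOn_pow_mul_exp_neg k).mono'
    (by fun_prop : Measurable fun x : ℝ => x ^ k / (exp x - z)).aestronglyMeasurable ?_
  filter_upwards [ae_restrict_mem measurableSet_Ioi] with x (hx : 0 < x)
  have : 0 < exp x - z := by linarith [exp_pos x]
  rw [Real.norm_of_nonneg (by positivity)]
  exact pow_div_exp_sub_le k hz hx.le

lemma integral_inv_const_sub {c z : ℝ} (hc : 0 < c) (hz : z ≤ 0) :
    ∫ u in z..0, (c - u)⁻¹ = log (1 - z / c) := by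
  rw [intervalIntegral.integral_comp_sub_left (fun u => u⁻¹),
    integral_inv_of_pos (by linarith) (by linarith), sub_zero, sub_div, div_self hc.ne']

section LogOneSubMulExpNeg

variable {z : ℝ}

lemma log_one_sub_mul_exp_neg_nonneg (hz : z ≤ 0) (x : ℝ) : 0 ≤ log (1 - z * exp (-x)) :=
  log_nonneg (by nlinarith [exp_pos (-x)])

lemma log_one_sub_mul_exp_neg_le (hz : z ≤ 0) (x : ℝ) :
    log (1 - z * exp (-x)) ≤ -z * exp (-x) := by
  have := log_le_sub_one_of_pos (x := 1 - z * exp (-x)) (by nlinarith [exp_pos (-x)])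
  linarith

lemma hasDerivAt_log_one_sub_mul_exp_neg (hz : z ≤ 0) (x : ℝ) :
    HasDerivAt (fun x => log (1 - z * exp (-x))) (z / (exp x - z)) x := by
  have h := (((hasDerivAt_neg x).exp.const_mul z).const_sub 1).log
    (by nlinarith [exp_pos (-x)] : 1 - z * exp (-x) ≠ 0)
  convert h using 1
  rw [exp_neg]
  field_simp

lemma tendsto_pow_mul_log_one_sub_mul_exp_neg (m : ℕ) (hz : z ≤ 0) :
    Tendsto (fun x => x ^ m * log (1 - z * exp (-x))) atTop (𝓝 0) := by
  have hupper : Tendsto (fun x : ℝ => -z * (x ^ m * exp (-x))) atTop (𝓝 0) := by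
    simpa using (tendsto_pow_mul_exp_neg_atTop_nhds_zero m).const_mul (-z)
  refine tendsto_of_tendsto_of_tendsto_of_le_of_le' tendsto_const_nhds hupper ?_ ?_
  all_goals filter_upwards [eventually_ge_atTop 0] with x hx
  · exact mul_nonneg (pow_nonneg hx m) (log_one_sub_mul_exp_neg_nonneg hz x)
  · calc x ^ m * log (1 - z * exp (-x)) ≤ x ^ m * (-z * exp (-x)) := by
          gcongr; exact log_one_sub_mul_exp_neg_le hz x
      _ = -z * (x ^ m * exp (-x)) := by ring

lemma integrableOn_pow_mul_log_one_sub_mul_exp_neg (m : ℕ) (hz : z ≤ 0) :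
    IntegrableOn (fun x : ℝ => x ^ m * log (1 - z * exp (-x))) (Ioi 0) := by
  refine ((integrableOn_pow_mul_exp_neg m).const_mul (-z)).mono'
    (by fun_prop : Measurable fun x : ℝ => x ^ m * log (1 - z * exp (-x))).aestronglyMeasurable ?_
  filter_upwards [ae_restrict_mem measurableSet_Ioi] with x (hx : 0 < x)
  rw [Real.norm_of_nonneg (mul_nonneg (by positivity) (log_one_sub_mul_exp_neg_nonneg hz x))]
  calc x ^ m * log (1 - z * exp (-x)) ≤ x ^ m * (-z * exp (-x)) := by
        gcongr; exact log_one_sub_mul_exp_neg_le hz x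
    _ = -z * (x ^ m * exp (-x)) := by ring

end LogOneSubMulExpNeg

lemma integral_div_exp_sub {z : ℝ} (hz : z ≤ 0) :
    ∫ x in Ioi 0, z / (exp x - z) = -log (1 - z) := by
  have hint : IntegrableOn (fun x : ℝ => z / (exp x - z)) (Ioi 0) :=
    IntegrableOn.congr_fun ((integrableOn_pow_div_exp_sub 0 hz).const_mul z)
      (fun x _ => by simp [div_eq_mul_inv]) measurableSet_Ioi
  rw [integral_Ioi_of_hasDerivAt_of_tendsto
    (hasDerivAt_log_one_sub_mul_exp_neg hz 0).continuousAt.continuousWithinAt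
    (fun x _ => hasDerivAt_log_one_sub_mul_exp_neg hz x) hint
    (by simpa using tendsto_pow_mul_log_one_sub_mul_exp_neg 0 hz)]
  simp

lemma mul_integral_pow_div_exp_sub (k : ℕ) {z : ℝ} (hz : z ≤ 0) :
    z * ∫ x in Ioi 0, x ^ (k + 1) / (exp x - z)
      = -((k + 1) * ∫ x in Ioi 0, x ^ k * log (1 - z * exp (-x))) := by
  have hφ := hasDerivAt_log_one_sub_mul_exp_neg hz
  have hpow (x : ℝ) : HasDerivAt (fun x : ℝ => x ^ (k + 1)) ((k + 1) * x ^ k) x := by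
    simpa using hasDerivAt_pow (k + 1) x
  have hint₁ : IntegrableOn (fun x : ℝ => x ^ (k + 1) * (z / (exp x - z))) (Ioi 0) :=
    IntegrableOn.congr_fun ((integrableOn_pow_div_exp_sub (k + 1) hz).const_mul z)
      (fun x _ => by ring) measurableSet_Ioi
  have hint₂ : IntegrableOn (fun x : ℝ => (k + 1) * x ^ k * log (1 - z * exp (-x))) (Ioi 0) :=
    IntegrableOn.congr_fun
      ((integrableOn_pow_mul_log_one_sub_mul_exp_neg k hz).const_mul ((k : ℝ) + 1))
      (fun x _ => by ring) measurableSet_Ioi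
  have hzero : Tendsto (fun x : ℝ => x ^ (k + 1) * log (1 - z * exp (-x))) (𝓝[>] 0) (𝓝 0) := by
    simpa using ((((continuous_pow (k + 1)).tendsto 0).mul (hφ 0).continuousAt.tendsto).mono_left
      nhdsWithin_le_nhds)
  have hibp := integral_Ioi_mul_deriv_eq_deriv_mul (fun x _ => hpow x) (fun x _ => hφ x)
    hint₁ hint₂ hzero (tendsto_pow_mul_log_one_sub_mul_exp_neg (k + 1) hz)
  calc z * ∫ x in Ioi 0, x ^ (k + 1) / (exp x - z)
      = ∫ x in Ioi 0, x ^ (k + 1) * (z / (exp x - z)) := by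
        rw [← integral_const_mul]; congr with x; ring
    _ = 0 - 0 - ∫ x in Ioi 0, (k + 1) * x ^ k * log (1 - z * exp (-x)) := hibp
    _ = -((k + 1) * ∫ x in Ioi 0, x ^ k * log (1 - z * exp (-x))) := by
        rw [← integral_const_mul]; simp only [mul_assoc, zero_sub, sub_zero]

lemma integral_Ioc_integral_pow_div_exp_sub (k : ℕ) {z : ℝ} (hz : z ≤ 0) :
    ∫ u in Ioc z 0, ∫ x in Ioi 0, x ^ k / (exp x - u)
      = ∫ x in Ioi 0, x ^ k * log (1 - z * exp (-x)) := by
  have hint : Integrable (Function.uncurry fun u x : ℝ => x ^ k / (exp x - u))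
      ((volume.restrict (Ioc z 0)).prod (volume.restrict (Ioi 0))) := by
    have hdom : Integrable (fun p : ℝ × ℝ => (1 : ℝ) * (p.2 ^ k * exp (-p.2)))
        ((volume.restrict (Ioc z 0)).prod (volume.restrict (Ioi 0))) :=
      (integrable_const (1 : ℝ)).mul_prod (integrableOn_pow_mul_exp_neg k)
    refine hdom.mono'
      (by fun_prop : Measurable fun p : ℝ × ℝ => p.2 ^ k / (exp p.2 - p.1)).aestronglyMeasurable ?_
    rw [Measure.prod_restrict]
    filter_upwards [ae_restrict_mem (measurableSet_Ioc.prod measurableSet_Ioi)]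
      with ⟨u, x⟩ ⟨⟨_, hu⟩, (hx : 0 < x)⟩
    have : 0 < exp x - u := by linarith [exp_pos x]
    rw [Function.uncurry_apply_pair, Real.norm_of_nonneg (by positivity), one_mul]
    exact pow_div_exp_sub_le k hu hx.le
  rw [integral_integral_swap hint]
  refine setIntegral_congr_fun measurableSet_Ioi fun x _ => ?_
  simp only [div_eq_mul_inv]
  rw [integral_const_mul, ← intervalIntegral.integral_of_le hz,
    integral_inv_const_sub (exp_pos x) hz, div_eq_mul_inv, exp_neg]

lemma Li_one {z : ℝ} (hz : z ≤ 0) : Li 1 z = -log (1 - z) := by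
  have hLi₀ : ∀ᵐ u : ℝ, u ∈ Ι 0 z → Li 0 u / u = (1 - u)⁻¹ := by
    filter_upwards [Measure.ae_ne volume 0] with u hu _
    rw [Li, div_div_cancel_left' hu]
  calc Li 1 z = ∫ u in 0..z, Li 0 u / u := rfl
    _ = -log (1 - z) := by
      rw [intervalIntegral.integral_congr_ae hLi₀, intervalIntegral.integral_symm,
        integral_inv_const_sub one_pos hz, div_one]

lemma Li_succ_eq_integral (k : ℕ) {z : ℝ} (hz : z ≤ 0) :
    Li (k + 1) z = z / k ! * ∫ x in Ioi 0, x ^ k / (exp x - z) := by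
  induction k generalizing z with
  | zero =>
    rw [Li_one hz, ← integral_div_exp_sub hz, ← integral_const_mul]
    simp [div_eq_mul_inv]
  | succ k ih =>
    have hLi : ∀ᵐ u : ℝ, u ∈ Ι 0 z →
        Li (k + 1) u / u = (∫ x in Ioi 0, x ^ k / (exp x - u)) / k ! := by
      filter_upwards [Measure.ae_ne volume 0] with u hu hmem
      rw [uIoc_of_ge hz] at hmem
      rw [ih hmem.2]
      field_simp
    calc Li (k + 2) z = ∫ u in 0..z, Li (k + 1) u / u := rfl
      _ = -(∫ u in Ioc z 0, ∫ x in Ioi 0, x ^ k / (exp x - u)) / k ! := by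
        rw [intervalIntegral.integral_congr_ae hLi, intervalIntegral.integral_symm,
          intervalIntegral.integral_of_le hz, integral_div, neg_div]
      _ = -(∫ x in Ioi 0, x ^ k * log (1 - z * exp (-x))) / k ! := by
        rw [integral_Ioc_integral_pow_div_exp_sub k hz]
      _ = z / (k + 1)! * ∫ x in Ioi 0, x ^ (k + 1) / (exp x - z) := by
        rw [div_mul_eq_mul_div, mul_integral_pow_div_exp_sub k hz, Nat.factorial_succ,
          Nat.cast_mul]
        field_simp
        push_cast
        ring

noncomputable def etaDoubleIntegral (a b : ℕ) : ℝ :=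
  ∫ t in Ioi 0, ∫ x in Ioi 0, t ^ b * x ^ a / (exp x + exp t - 1)

lemma exp_half_mul_exp_half_le {x t : ℝ} (hx : 0 ≤ x) (ht : 0 ≤ t) :
    exp (x / 2) * exp (t / 2) ≤ exp x + exp t - 1 := by
  have hx' := one_le_exp (by positivity : 0 ≤ x / 2)
  have ht' := one_le_exp (by positivity : 0 ≤ t / 2)
  have hx2 : exp x = exp (x / 2) * exp (x / 2) := by rw [← exp_add, add_halves]
  have ht2 : exp t = exp (t / 2) * exp (t / 2) := by rw [← exp_add, add_halves]
  nlinarith [sq_nonneg (exp (x / 2) - exp (t / 2))]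

lemma integrable_pow_mul_pow_div_exp_add_exp_sub_one (a b : ℕ) :
    Integrable (Function.uncurry fun t x : ℝ => t ^ b * x ^ a / (exp x + exp t - 1))
      ((volume.restrict (Ioi 0)).prod (volume.restrict (Ioi 0))) := by
  have hdom := (integrableOn_pow_mul_exp_neg_mul b one_half_pos).mul_prod
    (integrableOn_pow_mul_exp_neg_mul a one_half_pos)
  refine hdom.mono' (by fun_prop : Measurable fun p : ℝ × ℝ =>
    p.1 ^ b * p.2 ^ a / (exp p.2 + exp p.1 - 1)).aestronglyMeasurable ?_
  rw [Measure.prod_restrict]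
  filter_upwards [ae_restrict_mem (measurableSet_Ioi.prod measurableSet_Ioi)]
    with ⟨t, x⟩ ⟨(ht : 0 < t), (hx : 0 < x)⟩
  have hden := exp_half_mul_exp_half_le hx.le ht.le
  have hpos : 0 < exp (x / 2) * exp (t / 2) := by positivity
  rw [Function.uncurry_apply_pair, Real.norm_of_nonneg (div_nonneg (by positivity) (by linarith))]
  calc t ^ b * x ^ a / (exp x + exp t - 1) ≤ t ^ b * x ^ a / (exp (x / 2) * exp (t / 2)) :=
        div_le_div_of_nonneg_left (by positivity) hpos hden
    _ = t ^ b * exp (-(1 / 2 * t)) * (x ^ a * exp (-(1 / 2 * x))) := by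
        rw [exp_neg, exp_neg]; ring_nf

lemma etaDoubleIntegral_comm (a b : ℕ) : etaDoubleIntegral a b = etaDoubleIntegral b a := by
  rw [etaDoubleIntegral,
    integral_integral_swap (integrable_pow_mul_pow_div_exp_add_exp_sub_one a b)]
  refine setIntegral_congr_fun measurableSet_Ioi fun t _ =>
    setIntegral_congr_fun measurableSet_Ioi fun x _ => ?_
  ring

lemma eta_succ_succ (a b : ℕ) : eta (a + 1) (b + 1) = etaDoubleIntegral a b / (a ! * b !) := by
  have hinner (t : ℝ) (ht : t ∈ Ioi 0) : t ^ b * Li (a + 1) (1 - exp t) / (1 - exp t)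
      = (∫ x in Ioi 0, t ^ b * x ^ a / (exp x + exp t - 1)) / a ! := by
    have hz : 1 - exp t < 0 := by linarith [one_lt_exp_iff.2 ht]
    have hI : ∫ x in Ioi 0, t ^ b * x ^ a / (exp x + exp t - 1)
        = t ^ b * ∫ x in Ioi 0, x ^ a / (exp x - (1 - exp t)) := by
      rw [← integral_const_mul]; congr with x; ring
    rw [Li_succ_eq_integral a hz.le, hI]
    field_simp [hz.ne]
  rw [eta, Nat.add_sub_cancel, setIntegral_congr_fun measurableSet_Ioi hinner,
    integral_div, etaDoubleIntegral]
  field_simp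

/-- Duality `η(k; n) = η(n; k)` for positive integers `k`, `n`. -/
theorem eta_duality (k n : ℕ) (hk : 1 ≤ k) (hn : 1 ≤ n) : eta k n = eta n k := by
  obtain ⟨a, rfl⟩ := Nat.exists_eq_add_of_le' hk
  obtain ⟨b, rfl⟩ := Nat.exists_eq_add_of_le' hn
  rw [eta_succ_succ, eta_succ_succ, etaDoubleIntegral_comm, mul_comm]
end

section
/- The multiple zeta values satisfy ζ(1,1,2) + 2ζ(2,2) = 2ζ(1,3) + 2ζ(1,1,2), equivalently 2ζ(2,2) = 2ζ(1,3) + ζ(1,1,2). -/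
/-!
Write `Z, B, A, C` for `ζ(4), ζ(1,3), ζ(2,2), ζ(1,1,2)`.
Partial fractions `1/(ab) = (1/a + 1/b)/(a + b)` applied to Tornheim's double series
`T(r,s,t) = ∑ a⁻ʳ b⁻ˢ (a+b)⁻ᵗ` give `T(1,1,2) = 2B`, `T(2,1,1) = A + 2B` and
`ζ(2)² = T(2,2,0) = 2 T(2,1,1)`; the stuffle product gives `ζ(2)² = 2A + Z`, and the telescoping sum
`∑_b 1/(b(a+b)) = H_a/a` gives `T(2,1,1) = B + Z`. Hence `Z = 4B` and `A = 3B`.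
Evaluating `∑_{m<n, p} 1/(m n p (n+p))` once by partial fractions (`3C`) and once by telescoping
(`2C + A + B`) gives `C = A + B = 4B`.
All series are summed in `ℝ≥0∞`, where they can be rearranged freely; finiteness is needed only
to cancel.
-/

/-- Multiple zeta value `ζ(k₁,…,k_r) = Σ_{0<m₁<⋯<m_r} ∏ mᵢ^{-kᵢ}`. -/
noncomputable def mzv (k : List ℕ) : ℝ :=
  ∑' m : {f : Fin k.length → ℕ+ // StrictMono f},
    ∏ i : Fin k.length, ((m.1 i : ℝ) ^ (k.get i))⁻¹

open ENNReal Filter Topology Finset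

namespace MZV

theorem hasSum_sub_nat_add {f : ℕ → ℝ} (hf : Antitone f) (h0 : Tendsto f atTop (𝓝 0)) (q : ℕ) :
    HasSum (fun p => f p - f (p + q)) (∑ k ∈ range q, f k) := by
  have hpartial (N : ℕ) : ∑ p ∈ range N, (f p - f (p + q))
      = ∑ k ∈ range q, f k - ∑ k ∈ range q, f (N + k) := by
    have h₁ := sum_range_add f N q
    have h₂ := sum_range_add f q N
    rw [add_comm q N] at h₂
    simp only [sum_sub_distrib, add_comm _ q]
    linarith
  rw [hasSum_iff_tendsto_nat_of_nonneg (fun p => sub_nonneg.2 (hf (Nat.le_add_right p q)))]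
  simp only [hpartial]
  have htail : Tendsto (fun N => ∑ k ∈ range q, f (N + k)) atTop (𝓝 0) := by
    simpa using tendsto_finsetSum (range q) fun k _ => h0.comp (tendsto_add_atTop_nat k)
  simpa using tendsto_const_nhds.sub htail

theorem tsum_ofReal_sub_nat_add {f : ℕ → ℝ} (hf : Antitone f) (h0 : Tendsto f atTop (𝓝 0))
    (q : ℕ) : ∑' p, ENNReal.ofReal (f p - f (p + q)) = ENNReal.ofReal (∑ k ∈ range q, f k) := by
  rw [← ENNReal.ofReal_tsum_of_nonneg (fun p => sub_nonneg.2 (hf (Nat.le_add_right p q)))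
    (hasSum_sub_nat_add hf h0 q).summable, (hasSum_sub_nat_add hf h0 q).tsum_eq]

theorem tsum_eq_sum_range_add_add_tsum (f : ℕ → ℝ≥0∞) (n : ℕ) :
    ∑' m, f m = ∑ m ∈ range n, f m + f n + ∑' e, f (n + e + 1) := by
  rw [← sum_range_succ, ← ENNReal.summable.sum_add_tsum_nat_add' (k := n + 1)]
  exact congrArg _ (tsum_congr fun e => by ring_nf)

theorem tsum_sum_range (F : ℕ → ℕ → ℝ≥0∞) :
    ∑' n, ∑ k ∈ range n, F k n = ∑' k, ∑' e, F k (k + e + 1) := by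
  have hfinite (n : ℕ) : ∑ k ∈ range n, F k n = ∑' k, if k < n then F k n else 0 := by
    rw [tsum_eq_sum (s := range n) (fun k hk => if_neg (by simpa using hk))]
    exact sum_congr rfl fun k hk => (if_pos (by simpa using hk)).symm
  simp only [hfinite]
  rw [ENNReal.tsum_comm]
  refine tsum_congr fun k => ?_
  rw [tsum_eq_sum_range_add_add_tsum _ k,
    sum_eq_zero fun n hn => if_neg (by simp only [mem_range] at hn; omega),
    if_neg (lt_irrefl k)]
  simp

theorem antitone_inv_succ : Antitone fun n : ℕ => ((n : ℝ) + 1)⁻¹ := fun m n h =>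
  inv_anti₀ (by positivity) (by simpa using h)

theorem tendsto_inv_succ : Tendsto (fun n : ℕ => ((n : ℝ) + 1)⁻¹) atTop (𝓝 0) :=
  tendsto_inv_atTop_zero.comp (tendsto_natCast_atTop_atTop.atTop_add tendsto_const_nhds)

noncomputable def J (n : ℕ) : ℝ≥0∞ := ENNReal.ofReal ((n : ℝ) + 1)⁻¹

theorem J_ne_top (n : ℕ) : J n ≠ ∞ := ENNReal.ofReal_ne_top

theorem toReal_J (n : ℕ) : (J n).toReal = ((n : ℝ) + 1)⁻¹ :=
  ENNReal.toReal_ofReal (by positivity)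

theorem J_le_one (n : ℕ) : J n ≤ 1 :=
  ENNReal.ofReal_le_one.2 (inv_le_one_of_one_le₀ (by simp))

theorem J_mul_J (m n : ℕ) : J m * J n = (J m + J n) * J (m + n + 1) := by
  rw [← ENNReal.toReal_eq_toReal_iff' (mul_ne_top (J_ne_top m) (J_ne_top n))
    (mul_ne_top (add_ne_top.2 ⟨J_ne_top m, J_ne_top n⟩) (J_ne_top _))]
  simp only [ENNReal.toReal_mul, ENNReal.toReal_add (J_ne_top m) (J_ne_top n), toReal_J]
  push_cast
  field_simp
  ring

theorem tsum_J_mul_J (q : ℕ) : ∑' p, J p * J (q + p + 1) = J q * ∑ k ∈ range (q + 1), J k := by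
  have hterm (p : ℕ) : J p * J (q + p + 1)
      = J q * ENNReal.ofReal (((p : ℝ) + 1)⁻¹ - (((p + (q + 1) : ℕ) : ℝ) + 1)⁻¹) := by
    simp only [J]
    rw [← ENNReal.ofReal_mul (by positivity), ← ENNReal.ofReal_mul (by positivity)]
    congr 1
    push_cast
    field_simp
    ring
  rw [tsum_congr hterm, ENNReal.tsum_mul_left,
    tsum_ofReal_sub_nat_add antitone_inv_succ tendsto_inv_succ,
    ENNReal.ofReal_sum_of_nonneg (fun k _ => by positivity)]
  rfl

theorem tsum_J_sq_le (b : ℕ) : ∑' e, J (b + e + 1) ^ 2 ≤ J b := by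
  have hterm (e : ℕ) : J (b + e + 1) ^ 2
      ≤ ENNReal.ofReal ((((e + b : ℕ) : ℝ) + 1)⁻¹ - (((e + 1 + b : ℕ) : ℝ) + 1)⁻¹) := by
    rw [J, ← ENNReal.ofReal_pow (by positivity)]
    refine ENNReal.ofReal_le_ofReal ?_
    have hdiff : ((e : ℝ) + b + 1)⁻¹ - ((e : ℝ) + 1 + b + 1)⁻¹
        = (((e : ℝ) + b + 1) * ((e : ℝ) + b + 2))⁻¹ := by
      field_simp
      ring
    push_cast
    rw [hdiff, sq, ← mul_inv]
    exact inv_anti₀ (by positivity) (by nlinarith)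
  calc _ ≤ _ := ENNReal.tsum_le_tsum hterm
    _ = J b := by
      rw [tsum_ofReal_sub_nat_add (f := fun e => (((e + b : ℕ) : ℝ) + 1)⁻¹)
        (antitone_inv_succ.comp_monotone fun _ _ h => by omega)
        (tendsto_inv_succ.comp (tendsto_add_atTop_nat b)) 1]
      simp [J]

noncomputable def zeta1 (k : ℕ) : ℝ≥0∞ := ∑' n, J n ^ k

/-- `ζ(k₁, k₂)` in gap coordinates `m₁ = a + 1`, `m₂ = m₁ + d + 1`. -/
noncomputable def zeta2 (k₁ k₂ : ℕ) : ℝ≥0∞ := ∑' a, ∑' d, J a ^ k₁ * J (a + d + 1) ^ k₂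

/-- `ζ(k₁, k₂, k₃)` in gap coordinates `m₁ = a + 1`, `m₂ = m₁ + d + 1`, `m₃ = m₂ + e + 1`. -/
noncomputable def zeta3 (k₁ k₂ k₃ : ℕ) : ℝ≥0∞ :=
  ∑' a, ∑' d, ∑' e, J a ^ k₁ * J (a + d + 1) ^ k₂ * J (a + d + e + 2) ^ k₃

theorem zeta1_mul_zeta1 (r s : ℕ) : zeta1 r * zeta1 s = zeta2 r s + zeta2 s r + zeta1 (r + s) := by
  have hsplit (a : ℕ) : ∑' b, J a ^ r * J b ^ s = ∑ b ∈ range a, J b ^ s * J a ^ r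
      + J a ^ (r + s) + ∑' d, J a ^ r * J (a + d + 1) ^ s := by
    rw [tsum_eq_sum_range_add_add_tsum _ a, pow_add]
    simp only [mul_comm (J a ^ r)]
  rw [zeta1, zeta1, ← ENNReal.tsum_mul_right]
  simp only [← ENNReal.tsum_mul_left, hsplit, ENNReal.tsum_add, tsum_sum_range]
  rw [zeta2, zeta2, zeta1]
  ring

theorem zeta1_two_ne_top : zeta1 2 ≠ ∞ := by
  have h : zeta1 2 ≤ J 0 ^ 2 + J 0 := by
    rw [zeta1, tsum_eq_sum_range_add_add_tsum _ 0, sum_range_zero, zero_add]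
    exact add_le_add le_rfl (tsum_J_sq_le 0)
  exact ne_top_of_le_ne_top (add_ne_top.2 ⟨pow_ne_top (J_ne_top 0), J_ne_top 0⟩) h

theorem zeta2_le_zeta2 {k₁ k₂ l₁ l₂ : ℕ} (h₁ : l₁ ≤ k₁) (h₂ : l₂ ≤ k₂) :
    zeta2 k₁ k₂ ≤ zeta2 l₁ l₂ :=
  ENNReal.tsum_le_tsum fun _ => ENNReal.tsum_le_tsum fun _ =>
    mul_le_mul' (pow_le_pow_right_of_le_one' (J_le_one _) h₁)
      (pow_le_pow_right_of_le_one' (J_le_one _) h₂)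

theorem zeta2_one_two_le_zeta1_two : zeta2 1 2 ≤ zeta1 2 := by
  simp only [zeta2, zeta1, pow_one, ENNReal.tsum_mul_left, sq]
  exact ENNReal.tsum_le_tsum fun a => mul_le_mul_right (by simpa [sq] using tsum_J_sq_le a) _

theorem zeta2_ne_top {k₁ k₂ : ℕ} (h₁ : 1 ≤ k₁) (h₂ : 2 ≤ k₂) : zeta2 k₁ k₂ ≠ ∞ :=
  ne_top_of_le_ne_top zeta1_two_ne_top
    ((zeta2_le_zeta2 h₁ h₂).trans zeta2_one_two_le_zeta1_two)

theorem zeta3_le_zeta2 (k₁ k₂ : ℕ) : zeta3 k₁ k₂ 2 ≤ zeta2 k₁ (k₂ + 1) := by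
  refine ENNReal.tsum_le_tsum fun a => ENNReal.tsum_le_tsum fun d => ?_
  calc ∑' e, J a ^ k₁ * J (a + d + 1) ^ k₂ * J (a + d + e + 2) ^ 2
      = J a ^ k₁ * J (a + d + 1) ^ k₂ * ∑' e, J (a + d + 1 + e + 1) ^ 2 := by
        rw [← ENNReal.tsum_mul_left]
        exact tsum_congr fun e => by ring_nf
    _ ≤ J a ^ k₁ * J (a + d + 1) ^ k₂ * J (a + d + 1) := mul_le_mul_right (tsum_J_sq_le _) _
    _ = J a ^ k₁ * J (a + d + 1) ^ (k₂ + 1) := by ring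

/-- Tornheim's double series `T(r, s, t) = ∑_{a, b ≥ 1} a⁻ʳ b⁻ˢ (a + b)⁻ᵗ`. -/
noncomputable def tornheim (r s t : ℕ) : ℝ≥0∞ := ∑' a, ∑' b, J a ^ r * J b ^ s * J (a + b + 1) ^ t

theorem tornheim_comm (r s t : ℕ) : tornheim r s t = tornheim s r t := by
  rw [tornheim, ENNReal.tsum_comm]
  exact tsum_congr fun a => tsum_congr fun b => by rw [mul_comm (J b ^ r), add_comm b a]

theorem tornheim_succ_succ (r s t : ℕ) :
    tornheim (r + 1) (s + 1) t = tornheim r (s + 1) (t + 1) + tornheim (r + 1) s (t + 1) := by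
  simp only [tornheim, ← ENNReal.tsum_add]
  refine tsum_congr fun a => tsum_congr fun b => ?_
  calc J a ^ (r + 1) * J b ^ (s + 1) * J (a + b + 1) ^ t
      = J a ^ r * J b ^ s * (J a * J b) * J (a + b + 1) ^ t := by ring
    _ = _ := by rw [J_mul_J]; ring

theorem tornheim_zero_middle (r t : ℕ) : tornheim r 0 t = zeta2 r t := by
  simp [tornheim, zeta2]

theorem tornheim_zero_right (r s : ℕ) : tornheim r s 0 = zeta1 r * zeta1 s := by
  rw [zeta1, zeta1, ← ENNReal.tsum_mul_right]
  simp only [tornheim, pow_zero, mul_one, ← ENNReal.tsum_mul_left]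

theorem tornheim_one_one (r : ℕ) : tornheim r 1 1 = zeta2 1 (r + 1) + zeta1 (r + 2) := by
  have hinner (a : ℕ) : ∑' b, J a ^ r * J b ^ 1 * J (a + b + 1) ^ 1
      = ∑ k ∈ range a, J k ^ 1 * J a ^ (r + 1) + J a ^ (r + 2) := by
    simp only [pow_one, mul_assoc, ENNReal.tsum_mul_left, tsum_J_mul_J, sum_range_succ]
    rw [← sum_mul]
    ring
  simp only [tornheim, hinner, ENNReal.tsum_add, tsum_sum_range, zeta2, zeta1]

/-- `∑_{0 < m < n, p > 0} 1 / (m n p (n + p))`. -/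
noncomputable def nestedTornheim : ℝ≥0∞ :=
  ∑' a, ∑' d, ∑' p, J a * J (a + d + 1) * J p * J (a + d + p + 2)

theorem zeta3_one_one_two_def :
    zeta3 1 1 2 = ∑' a, ∑' d, ∑' e, J a * J (a + d + 1) * J (a + d + e + 2) ^ 2 := by
  simp [zeta3]

theorem nestedTornheim_eq_three_mul : nestedTornheim = 3 * zeta3 1 1 2 := by
  have hterm (a d p : ℕ) : J a * J (a + d + 1) * J p * J (a + d + p + 2)
      = J a * J (a + d + 1) * J (a + d + p + 2) ^ 2
        + (J a * J (a + p + 1) * J (a + p + d + 2) ^ 2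
          + J p * J (p + a + 1) * J (p + a + d + 2) ^ 2) := by
    have h₁ := J_mul_J (a + d + 1) p
    rw [show a + d + 1 + p + 1 = a + d + p + 2 by ring] at h₁
    rw [show a + p + d + 2 = a + d + p + 2 by ring, show p + a + 1 = a + p + 1 by ring,
      show p + a + d + 2 = a + d + p + 2 by ring]
    calc _ = J a * (J (a + d + 1) * J p) * J (a + d + p + 2) := by ring
      _ = J a * J (a + d + 1) * J (a + d + p + 2) ^ 2 + J a * J p * J (a + d + p + 2) ^ 2 := by
        rw [h₁]; ring
      _ = _ := by rw [J_mul_J a p]; ring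
  simp only [nestedTornheim, hterm, ENNReal.tsum_add]
  rw [tsum_congr fun a => ENNReal.tsum_comm (f := fun d p => J a * J (a + p + 1) * _),
    tsum_congr fun a => ENNReal.tsum_comm (f := fun d p => J p * J (p + a + 1) * _),
    ENNReal.tsum_comm (f := fun a p => ∑' d, J p * J (p + a + 1) * _), ← zeta3_one_one_two_def]
  ring

theorem nestedTornheim_eq_telescoped :
    nestedTornheim = 2 * zeta3 1 1 2 + zeta2 2 2 + zeta2 1 3 := by
  have hinner (a d : ℕ) : ∑' p, J a * J (a + d + 1) * J p * J (a + d + p + 2)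
      = ∑ k ∈ range a, J a * J (a + d + 1) ^ 2 * J k + J a ^ 2 * J (a + d + 1) ^ 2
        + ∑ j ∈ range d, J a * J (a + d + 1) ^ 2 * J (a + 1 + j) + J a * J (a + d + 1) ^ 3 := by
    calc _ = J a * J (a + d + 1) * ∑' p, J p * J (a + d + 1 + p + 1) := by
          rw [← ENNReal.tsum_mul_left]
          exact tsum_congr fun p => by ring_nf
      _ = J a * J (a + d + 1) ^ 2 * ∑ k ∈ range ((a + 1) + (d + 1)), J k := by
          rw [tsum_J_mul_J, show a + d + 1 + 1 = a + 1 + (d + 1) by ring]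
          ring
      _ = _ := by
          rw [sum_range_add, sum_range_succ, sum_range_succ, ← mul_sum, ← mul_sum,
            show a + 1 + d = a + d + 1 by ring]
          ring
  have hlow : ∑' a, ∑' d, ∑ k ∈ range a, J a * J (a + d + 1) ^ 2 * J k = zeta3 1 1 2 := by
    rw [ENNReal.tsum_comm, tsum_congr fun d => tsum_sum_range _, ENNReal.tsum_comm,
      zeta3_one_one_two_def]
    refine tsum_congr fun k => ?_
    rw [ENNReal.tsum_comm]
    exact tsum_congr fun e => tsum_congr fun d => by ring_nf
  have hmid : ∑' a, ∑' d, ∑ j ∈ range d, J a * J (a + d + 1) ^ 2 * J (a + 1 + j) = zeta3 1 1 2 := by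
    rw [zeta3_one_one_two_def]
    refine tsum_congr fun a => ?_
    rw [tsum_sum_range]
    exact tsum_congr fun j => tsum_congr fun e => by ring_nf
  simp only [nestedTornheim, hinner, ENNReal.tsum_add, hlow, hmid]
  simp only [zeta2, pow_one]
  ring

theorem tornheim_two_one_one : tornheim 2 1 1 = zeta2 2 2 + 2 * zeta2 1 3 := by
  have hU : tornheim 1 1 2 = 2 * zeta2 1 3 := by
    rw [tornheim_succ_succ 0 0 2, tornheim_comm 0, tornheim_zero_middle]
    ring
  rw [tornheim_succ_succ 1 0 1, hU, tornheim_zero_middle, add_comm]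

theorem tornheim_two_two_zero : tornheim 2 2 0 = 2 * tornheim 2 1 1 := by
  rw [tornheim_succ_succ 1 1 0, tornheim_comm 1]
  ring

theorem zeta1_four_eq_four_mul : zeta1 4 = 4 * zeta2 1 3 := by
  have h := tornheim_two_two_zero
  rw [tornheim_zero_right, zeta1_mul_zeta1, tornheim_two_one_one] at h
  have hA : 2 * zeta2 2 2 ≠ ∞ := mul_ne_top ofNat_ne_top (zeta2_ne_top one_le_two le_rfl)
  refine (ENNReal.add_right_inj hA).1 ?_
  calc 2 * zeta2 2 2 + zeta1 4 = zeta2 2 2 + zeta2 2 2 + zeta1 (2 + 2) := by ring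
    _ = 2 * (zeta2 2 2 + 2 * zeta2 1 3) := h
    _ = 2 * zeta2 2 2 + 4 * zeta2 1 3 := by ring

theorem zeta2_two_two_eq_three_mul : zeta2 2 2 = 3 * zeta2 1 3 := by
  have h := tornheim_one_one 2
  rw [tornheim_two_one_one, zeta1_four_eq_four_mul] at h
  have hB : 2 * zeta2 1 3 ≠ ∞ := mul_ne_top ofNat_ne_top (zeta2_ne_top le_rfl (by norm_num))
  refine (ENNReal.add_right_inj hB).1 ?_
  calc 2 * zeta2 1 3 + zeta2 2 2 = zeta2 2 2 + 2 * zeta2 1 3 := add_comm _ _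
    _ = zeta2 1 (2 + 1) + 4 * zeta2 1 3 := h
    _ = 2 * zeta2 1 3 + 3 * zeta2 1 3 := by ring

theorem zeta3_one_one_two_eq_add : zeta3 1 1 2 = zeta2 2 2 + zeta2 1 3 := by
  have hC : 2 * zeta3 1 1 2 ≠ ∞ :=
    mul_ne_top ofNat_ne_top (ne_top_of_le_ne_top (zeta2_ne_top le_rfl le_rfl) (zeta3_le_zeta2 1 1))
  refine (ENNReal.add_right_inj hC).1 ?_
  calc 2 * zeta3 1 1 2 + zeta3 1 1 2 = nestedTornheim := by rw [nestedTornheim_eq_three_mul]; ring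
    _ = _ := by rw [nestedTornheim_eq_telescoped]; ring

def gapEquiv₂ : ℕ × ℕ ≃ {f : Fin 2 → ℕ+ // StrictMono f} where
  toFun p := ⟨![p.1.succPNat, (p.1 + p.2 + 1).succPNat], by
    simp [Fin.strictMono_iff_lt_succ, ← PNat.coe_lt_coe]⟩
  invFun f := ((f.1 0 : ℕ) - 1, (f.1 1 : ℕ) - f.1 0 - 1)
  left_inv p := by ext <;> simp; omega
  right_inv := by
    rintro ⟨f, hf⟩
    have h01 : (f 0 : ℕ) < f 1 := hf (show (0 : Fin 2) < 1 by decide)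
    have h0 := (f 0).pos
    ext i
    fin_cases i <;> apply PNat.eq <;> simp <;> omega

def gapEquiv₃ : ℕ × ℕ × ℕ ≃ {f : Fin 3 → ℕ+ // StrictMono f} where
  toFun t := ⟨![t.1.succPNat, (t.1 + t.2.1 + 1).succPNat, (t.1 + t.2.1 + t.2.2 + 2).succPNat], by
    simp [Fin.strictMono_iff_lt_succ, Fin.forall_fin_succ, ← PNat.coe_lt_coe]⟩
  invFun f := ((f.1 0 : ℕ) - 1, (f.1 1 : ℕ) - f.1 0 - 1, (f.1 2 : ℕ) - f.1 1 - 1)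
  left_inv t := by ext <;> simp <;> omega
  right_inv := by
    rintro ⟨f, hf⟩
    have h01 : (f 0 : ℕ) < f 1 := hf (show (0 : Fin 3) < 1 by decide)
    have h12 : (f 1 : ℕ) < f 2 := hf (show (1 : Fin 3) < 2 by decide)
    have h0 := (f 0).pos
    ext i
    fin_cases i <;> apply PNat.eq <;> simp <;> omega

theorem mzv_pair (k₁ k₂ : ℕ) : mzv [k₁, k₂] = (zeta2 k₁ k₂).toReal := by
  rw [zeta2, ← ENNReal.tsum_prod' (f := fun p : ℕ × ℕ => J p.1 ^ k₁ * J (p.1 + p.2 + 1) ^ k₂),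
    ENNReal.tsum_toReal_eq fun _ => mul_ne_top (pow_ne_top (J_ne_top _)) (pow_ne_top (J_ne_top _))]
  refine (gapEquiv₂.tsum_eq _).symm.trans (tsum_congr fun p => ?_)
  simp [gapEquiv₂, Fin.prod_univ_two, toReal_J, mul_comm]

theorem mzv_triple (k₁ k₂ k₃ : ℕ) : mzv [k₁, k₂, k₃] = (zeta3 k₁ k₂ k₃).toReal := by
  rw [zeta3, ← tsum_congr fun a => ENNReal.tsum_prod'
      (f := fun q : ℕ × ℕ => J a ^ k₁ * J (a + q.1 + 1) ^ k₂ * J (a + q.1 + q.2 + 2) ^ k₃),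
    ← ENNReal.tsum_prod' (f := fun t : ℕ × ℕ × ℕ =>
      J t.1 ^ k₁ * J (t.1 + t.2.1 + 1) ^ k₂ * J (t.1 + t.2.1 + t.2.2 + 2) ^ k₃),
    ENNReal.tsum_toReal_eq fun _ => mul_ne_top (mul_ne_top (pow_ne_top (J_ne_top _))
      (pow_ne_top (J_ne_top _))) (pow_ne_top (J_ne_top _))]
  refine (gapEquiv₃.tsum_eq _).symm.trans (tsum_congr fun p => ?_)
  simp [gapEquiv₃, Fin.prod_univ_three, toReal_J, mul_comm]

end MZV

open MZV in
theorem mzv_rel_7 : mzv [1,1,2] + 2 * mzv [2,2] = 2 * mzv [1,3] + 2 * mzv [1,1,2] := by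
  have hA : mzv [2, 2] = 3 * mzv [1, 3] := by
    rw [mzv_pair, mzv_pair, zeta2_two_two_eq_three_mul, toReal_mul]
    norm_num
  have hC : mzv [1, 1, 2] = mzv [2, 2] + mzv [1, 3] := by
    rw [mzv_triple, mzv_pair, mzv_pair, zeta3_one_one_two_eq_add,
      toReal_add (zeta2_ne_top one_le_two le_rfl) (zeta2_ne_top le_rfl (by norm_num))]
  linarith
end

section
/- The weight-5 multiple zeta values satisfy ζ(5) = ζ(1,1,1,2). -/
open scoped ENNReal

/-! Auxiliary development: proof of the duality `ζ(5) = ζ(1,1,1,2)` via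
Seki–Yamamoto connected sums, carried out in `ℝ≥0∞`. -/

noncomputable def q (m n : ℕ) : ℝ≥0∞ :=
  ((m.factorial * n.factorial : ℕ) : ℝ≥0∞) / ((m+n).factorial : ℕ)

lemma q_ne_top (m n : ℕ) : q m n ≠ ⊤ := by
  simp [q, ENNReal.div_eq_top, Nat.factorial_ne_zero, ENNReal.mul_eq_top]

lemma q_toReal (m n : ℕ) :
    (q m n).toReal = (m.factorial * n.factorial : ℕ) / ((m+n).factorial : ℕ) := by
  simp [q, ENNReal.toReal_div]

lemma q_symm (m n : ℕ) : q m n = q n m := by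
  simp [q, mul_comm, Nat.add_comm]

lemma q_zero (m : ℕ) : q m 0 = 1 := by
  simp [q]
  exact ENNReal.div_self (by exact_mod_cast (Nat.factorial_ne_zero m)) (by simp)

lemma loc (m n : ℕ) (hn : n ≠ 0) :
    q (m+1) n * ((m+1 : ℕ) : ℝ≥0∞)⁻¹ + q (m+1) n * ((n : ℕ) : ℝ≥0∞)⁻¹
      = q m n * ((n : ℕ) : ℝ≥0∞)⁻¹ := by
  have hinv1 : ((m+1 : ℕ) : ℝ≥0∞)⁻¹ ≠ ⊤ := by simp
  have hinv2 : ((n : ℕ) : ℝ≥0∞)⁻¹ ≠ ⊤ := by simpa using hn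
  rw [← ENNReal.toReal_eq_toReal_iff'
    (ENNReal.add_ne_top.2 ⟨ENNReal.mul_ne_top (q_ne_top _ _) hinv1,
      ENNReal.mul_ne_top (q_ne_top _ _) hinv2⟩)
    (ENNReal.mul_ne_top (q_ne_top _ _) hinv2),
    ENNReal.toReal_add (ENNReal.mul_ne_top (q_ne_top _ _) hinv1)
      (ENNReal.mul_ne_top (q_ne_top _ _) hinv2)]
  simp only [ENNReal.toReal_mul, ENNReal.toReal_inv, q_toReal,
    show ∀ k:ℕ, ((k:ℝ≥0∞)).toReal = (k:ℝ) from fun k => rfl]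
  have h1 : ((m+1).factorial : ℝ) = (m+1) * m.factorial := by
    rw [Nat.factorial_succ]; push_cast; ring
  have h2 : ((m+1+n).factorial : ℝ) = (m+n+1) * (m+n).factorial := by
    rw [show m+1+n = (m+n)+1 by omega, Nat.factorial_succ]; push_cast; ring
  push_cast
  rw [h1, h2]
  have f1 : (m.factorial : ℝ) ≠ 0 := by exact_mod_cast Nat.factorial_ne_zero m
  have f2 : (n.factorial : ℝ) ≠ 0 := by exact_mod_cast Nat.factorial_ne_zero n
  have f3 : ((m+n).factorial : ℝ) ≠ 0 := by exact_mod_cast Nat.factorial_ne_zero (m+n)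
  have f4 : (m : ℝ) + 1 ≠ 0 := by positivity
  have f5 : (n : ℝ) ≠ 0 := by exact_mod_cast hn
  have f6 : (m : ℝ) + (n:ℝ) + 1 ≠ 0 := by positivity
  field_simp
  ring

lemma q_le (m n : ℕ) (hn : n ≠ 0) : q m n ≤ ((m+1 : ℕ) : ℝ≥0∞)⁻¹ := by
  rw [← ENNReal.toReal_le_toReal (q_ne_top _ _) (by simp), q_toReal, ENNReal.toReal_inv,
    show (((m+1:ℕ):ℝ≥0∞)).toReal = ((m+1:ℕ):ℝ) from rfl]
  rw [div_le_iff₀ (by positivity), inv_mul_eq_div, le_div_iff₀ (by positivity)]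
  have key : (m+1).factorial * n.factorial ≤ (m+n).factorial := by
    obtain ⟨n', rfl⟩ : ∃ n', n = n' + 1 := ⟨n-1, by omega⟩
    have hc : n'+1 ≤ (m+1+n').choose n' := by
      calc n'+1 = (n'+1).choose n' := (Nat.choose_succ_self_right n').symm
        _ ≤ (m+1+n').choose n' := Nat.choose_mono _ (by omega)
    have hf : (m+1+n').choose n' * n'.factorial * (m+1).factorial = (m+1+n').factorial := by
      have h := Nat.choose_mul_factorial_mul_factorial (show n' ≤ m+1+n' by omega)
      simpa [show m+1+n' - n' = m+1 by omega] using h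
    calc (m+1).factorial * (n'+1).factorial
        = (n'+1) * (n'.factorial * (m+1).factorial) := by
          rw [Nat.factorial_succ n']; ring
      _ ≤ (m+1+n').choose n' * (n'.factorial * (m+1).factorial) := mul_le_mul_left hc _
      _ = (m+1+n').factorial := by rw [← hf]; ring
      _ = (m+(n'+1)).factorial := by rw [show m+(n'+1) = m+1+n' by omega]
  push_cast
  calc (m.factorial * n.factorial : ℝ) * ((m:ℝ)+1)
      = ((m+1).factorial * n.factorial : ℕ) := by
        rw [Nat.factorial_succ]; push_cast; ring
    _ ≤ ((m+n).factorial : ℕ) := by exact_mod_cast key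

lemma partialSum (a n : ℕ) (hn : n ≠ 0) (M : ℕ) :
    (∑ k ∈ Finset.range M, q (a+(k+1)) n * ((a+(k+1) : ℕ) : ℝ≥0∞)⁻¹)
      + q (a+M) n * ((n:ℕ) : ℝ≥0∞)⁻¹ = q a n * ((n:ℕ) : ℝ≥0∞)⁻¹ := by
  induction M with
  | zero => simp
  | succ M ih =>
      rw [Finset.sum_range_succ, add_assoc,
        show a+(M+1) = (a+M)+1 by omega, loc (a+M) n hn, ih]

lemma key (a n : ℕ) (hn : n ≠ 0) :
    ∑' k : ℕ, q (a+(k+1)) n * ((a+(k+1) : ℕ) : ℝ≥0∞)⁻¹ = q a n * ((n:ℕ) : ℝ≥0∞)⁻¹ := by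
  rw [ENNReal.tsum_eq_iSup_nat]
  apply le_antisymm
  · exact iSup_le fun M => by rw [← partialSum a n hn M]; exact le_self_add
  · apply ENNReal.le_of_forall_pos_le_add
    intro ε hε _
    obtain ⟨N, hN⟩ := ENNReal.exists_inv_nat_lt (show ((ε:ℝ≥0∞)) ≠ 0 by
      simpa using hε.ne')
    have ht : q (a+N) n * ((n:ℕ) : ℝ≥0∞)⁻¹ ≤ (ε : ℝ≥0∞) := by
      calc q (a+N) n * ((n:ℕ) : ℝ≥0∞)⁻¹ ≤ q (a+N) n * 1 := by
            gcongr
            simp [ENNReal.inv_le_one]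
            exact_mod_cast Nat.one_le_iff_ne_zero.2 hn
        _ = q (a+N) n := mul_one _
        _ ≤ ((a+N+1 : ℕ) : ℝ≥0∞)⁻¹ := q_le _ _ hn
        _ ≤ ((N : ℕ) : ℝ≥0∞)⁻¹ := by
            gcongr
            exact_mod_cast by omega
        _ ≤ (ε : ℝ≥0∞) := hN.le
    calc q a n * ((n:ℕ) : ℝ≥0∞)⁻¹
        = (∑ k ∈ Finset.range N, q (a+(k+1)) n * ((a+(k+1) : ℕ) : ℝ≥0∞)⁻¹)
            + q (a+N) n * ((n:ℕ) : ℝ≥0∞)⁻¹ := (partialSum a n hn N).symm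
      _ ≤ (⨆ M, ∑ k ∈ Finset.range M, q (a+(k+1)) n * ((a+(k+1) : ℕ) : ℝ≥0∞)⁻¹) + ε :=
          add_le_add (le_iSup (fun M => ∑ k ∈ Finset.range M,
            q (a+(k+1)) n * ((a+(k+1) : ℕ) : ℝ≥0∞)⁻¹) N) ht

lemma step_key (b a : ℕ) (hb : b ≠ 0) :
    q b a * ((b:ℕ) : ℝ≥0∞)⁻¹
      = ∑' k : ℕ, q b (a+(k+1)) * ((a+(k+1) : ℕ) : ℝ≥0∞)⁻¹ := by
  rw [q_symm, ← key a b hb]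
  exact tsum_congr fun k => by rw [q_symm]

lemma last_key (n : ℕ) (hn : n ≠ 0) :
    ∑' m : ℕ, q (m+1) n * ((m+1:ℕ) : ℝ≥0∞)⁻¹ = ((n:ℕ) : ℝ≥0∞)⁻¹ := by
  have h := key 0 n hn
  simp only [Nat.zero_add] at h
  rw [h, q_symm, q_zero, one_mul]

lemma chain :
    ∑' m : ℕ, (((m+1:ℕ) : ℝ≥0∞))⁻¹ * (((m+1:ℕ) : ℝ≥0∞))⁻¹ * (((m+1:ℕ) : ℝ≥0∞))⁻¹
        * (((m+1:ℕ) : ℝ≥0∞))⁻¹ * (q (m+1) 0 * (((m+1:ℕ) : ℝ≥0∞))⁻¹)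
      = ∑' (k1 : ℕ) (k2 : ℕ) (k3 : ℕ) (k4 : ℕ),
          ((k1+1:ℕ) : ℝ≥0∞)⁻¹ * ((k1+k2+2:ℕ) : ℝ≥0∞)⁻¹ * ((k1+k2+k3+3:ℕ) : ℝ≥0∞)⁻¹
            * ((k1+k2+k3+k4+4:ℕ) : ℝ≥0∞)⁻¹ * ((k1+k2+k3+k4+4:ℕ) : ℝ≥0∞)⁻¹ := by
  have hm : ∀ m : ℕ, m + 1 ≠ 0 := fun m => Nat.succ_ne_zero m
  calc
    ∑' m : ℕ, (((m+1:ℕ) : ℝ≥0∞))⁻¹ * (((m+1:ℕ) : ℝ≥0∞))⁻¹ * (((m+1:ℕ) : ℝ≥0∞))⁻¹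
        * (((m+1:ℕ) : ℝ≥0∞))⁻¹ * (q (m+1) 0 * (((m+1:ℕ) : ℝ≥0∞))⁻¹)
      = ∑' (m : ℕ) (k1 : ℕ), (((m+1:ℕ) : ℝ≥0∞))⁻¹ * (((m+1:ℕ) : ℝ≥0∞))⁻¹ * (((m+1:ℕ) : ℝ≥0∞))⁻¹
          * ((k1+1:ℕ) : ℝ≥0∞)⁻¹ * (q (m+1) (k1+1) * (((m+1:ℕ) : ℝ≥0∞))⁻¹) := by
        refine tsum_congr fun m => ?_
        rw [step_key (m+1) 0 (hm m), ← ENNReal.tsum_mul_left]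
        exact tsum_congr fun k1 => by simp only [Nat.zero_add]; ring
    _ = ∑' (m : ℕ) (k1 : ℕ) (k2 : ℕ), (((m+1:ℕ) : ℝ≥0∞))⁻¹ * (((m+1:ℕ) : ℝ≥0∞))⁻¹
          * ((k1+1:ℕ) : ℝ≥0∞)⁻¹ * ((k1+1+(k2+1):ℕ) : ℝ≥0∞)⁻¹
          * (q (m+1) (k1+1+(k2+1)) * (((m+1:ℕ) : ℝ≥0∞))⁻¹) := by
        refine tsum_congr fun m => tsum_congr fun k1 => ?_
        rw [step_key (m+1) (k1+1) (hm m), ← ENNReal.tsum_mul_left]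
        exact tsum_congr fun k2 => by ring
    _ = ∑' (m : ℕ) (k1 : ℕ) (k2 : ℕ) (k3 : ℕ), (((m+1:ℕ) : ℝ≥0∞))⁻¹
          * ((k1+1:ℕ) : ℝ≥0∞)⁻¹ * ((k1+1+(k2+1):ℕ) : ℝ≥0∞)⁻¹ * ((k1+1+(k2+1)+(k3+1):ℕ) : ℝ≥0∞)⁻¹
          * (q (m+1) (k1+1+(k2+1)+(k3+1)) * (((m+1:ℕ) : ℝ≥0∞))⁻¹) := by
        refine tsum_congr fun m => tsum_congr fun k1 => tsum_congr fun k2 => ?_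
        rw [step_key (m+1) (k1+1+(k2+1)) (hm m), ← ENNReal.tsum_mul_left]
        exact tsum_congr fun k3 => by ring
    _ = ∑' (m : ℕ) (k1 : ℕ) (k2 : ℕ) (k3 : ℕ) (k4 : ℕ),
          ((k1+1:ℕ) : ℝ≥0∞)⁻¹ * ((k1+1+(k2+1):ℕ) : ℝ≥0∞)⁻¹ * ((k1+1+(k2+1)+(k3+1):ℕ) : ℝ≥0∞)⁻¹
          * ((k1+1+(k2+1)+(k3+1)+(k4+1):ℕ) : ℝ≥0∞)⁻¹
          * (q (m+1) (k1+1+(k2+1)+(k3+1)+(k4+1)) * (((m+1:ℕ) : ℝ≥0∞))⁻¹) := by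
        refine tsum_congr fun m => tsum_congr fun k1 => tsum_congr fun k2 => tsum_congr fun k3 => ?_
        rw [step_key (m+1) (k1+1+(k2+1)+(k3+1)) (hm m), ← ENNReal.tsum_mul_left]
        exact tsum_congr fun k4 => by ring
    _ = ∑' (k1 : ℕ) (m : ℕ) (k2 : ℕ) (k3 : ℕ) (k4 : ℕ),
          ((k1+1:ℕ) : ℝ≥0∞)⁻¹ * ((k1+1+(k2+1):ℕ) : ℝ≥0∞)⁻¹ * ((k1+1+(k2+1)+(k3+1):ℕ) : ℝ≥0∞)⁻¹
          * ((k1+1+(k2+1)+(k3+1)+(k4+1):ℕ) : ℝ≥0∞)⁻¹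
          * (q (m+1) (k1+1+(k2+1)+(k3+1)+(k4+1)) * (((m+1:ℕ) : ℝ≥0∞))⁻¹) := ENNReal.tsum_comm
    _ = ∑' (k1 : ℕ) (k2 : ℕ) (m : ℕ) (k3 : ℕ) (k4 : ℕ),
          ((k1+1:ℕ) : ℝ≥0∞)⁻¹ * ((k1+1+(k2+1):ℕ) : ℝ≥0∞)⁻¹ * ((k1+1+(k2+1)+(k3+1):ℕ) : ℝ≥0∞)⁻¹
          * ((k1+1+(k2+1)+(k3+1)+(k4+1):ℕ) : ℝ≥0∞)⁻¹
          * (q (m+1) (k1+1+(k2+1)+(k3+1)+(k4+1)) * (((m+1:ℕ) : ℝ≥0∞))⁻¹) :=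
        tsum_congr fun k1 => ENNReal.tsum_comm
    _ = ∑' (k1 : ℕ) (k2 : ℕ) (k3 : ℕ) (m : ℕ) (k4 : ℕ),
          ((k1+1:ℕ) : ℝ≥0∞)⁻¹ * ((k1+1+(k2+1):ℕ) : ℝ≥0∞)⁻¹ * ((k1+1+(k2+1)+(k3+1):ℕ) : ℝ≥0∞)⁻¹
          * ((k1+1+(k2+1)+(k3+1)+(k4+1):ℕ) : ℝ≥0∞)⁻¹
          * (q (m+1) (k1+1+(k2+1)+(k3+1)+(k4+1)) * (((m+1:ℕ) : ℝ≥0∞))⁻¹) :=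
        tsum_congr fun k1 => tsum_congr fun k2 => ENNReal.tsum_comm
    _ = ∑' (k1 : ℕ) (k2 : ℕ) (k3 : ℕ) (k4 : ℕ) (m : ℕ),
          ((k1+1:ℕ) : ℝ≥0∞)⁻¹ * ((k1+1+(k2+1):ℕ) : ℝ≥0∞)⁻¹ * ((k1+1+(k2+1)+(k3+1):ℕ) : ℝ≥0∞)⁻¹
          * ((k1+1+(k2+1)+(k3+1)+(k4+1):ℕ) : ℝ≥0∞)⁻¹
          * (q (m+1) (k1+1+(k2+1)+(k3+1)+(k4+1)) * (((m+1:ℕ) : ℝ≥0∞))⁻¹) :=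
        tsum_congr fun k1 => tsum_congr fun k2 => tsum_congr fun k3 => ENNReal.tsum_comm
    _ = ∑' (k1 : ℕ) (k2 : ℕ) (k3 : ℕ) (k4 : ℕ),
          ((k1+1:ℕ) : ℝ≥0∞)⁻¹ * ((k1+k2+2:ℕ) : ℝ≥0∞)⁻¹ * ((k1+k2+k3+3:ℕ) : ℝ≥0∞)⁻¹
            * ((k1+k2+k3+k4+4:ℕ) : ℝ≥0∞)⁻¹ * ((k1+k2+k3+k4+4:ℕ) : ℝ≥0∞)⁻¹ := by
        refine tsum_congr fun k1 => tsum_congr fun k2 => tsum_congr fun k3 => tsum_congr fun k4 => ?_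
        rw [ENNReal.tsum_mul_left, last_key _ (by omega),
          show k1+1+(k2+1) = k1+k2+2 by omega,
          show k1+k2+2+(k3+1) = k1+k2+k3+3 by omega,
          show k1+k2+k3+3+(k4+1) = k1+k2+k3+k4+4 by omega]

/-! Equivalences for the index sets. -/

def pn (a : ℕ) : ℕ+ := ⟨a+1, Nat.succ_pos a⟩

lemma pn_coe (a : ℕ) : (pn a : ℕ) = a + 1 := rfl

lemma pn_lt {a b : ℕ} (h : a < b) : pn a < pn b := by
  have h2 : (pn a : ℕ) < (pn b : ℕ) := by simp [pn_coe]; omega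
  exact (PNat.coe_lt_coe _ _).1 h2

lemma strictMono_of_vals {α : Type*} [Preorder α] (f : Fin 4 → α)
    (h01 : f 0 < f 1) (h12 : f 1 < f 2) (h23 : f 2 < f 3) : StrictMono f := by
  rw [Fin.strictMono_iff_lt_succ]
  intro i
  fin_cases i
  · exact h01
  · exact h12
  · exact h23

def e1 : ℕ ≃ {f : Fin 1 → ℕ+ // StrictMono f} where
  toFun m := ⟨fun _ => pn m, fun a b hab => by
    simp [Subsingleton.elim a b] at hab⟩
  invFun s := (s.1 0 : ℕ) - 1
  left_inv m := by simp [pn_coe]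
  right_inv s := by
    apply Subtype.ext
    funext i
    have hi : i = 0 := Subsingleton.elim _ _
    subst hi
    have h : 0 < (s.1 0 : ℕ) := (s.1 0).pos
    apply PNat.coe_injective
    show (s.1 0 : ℕ) - 1 + 1 = (s.1 0 : ℕ)
    omega

def e4 : (ℕ × ℕ × ℕ × ℕ) ≃ {f : Fin 4 → ℕ+ // StrictMono f} where
  toFun p := ⟨![pn p.1, pn (p.1+p.2.1+1), pn (p.1+p.2.1+p.2.2.1+2),
      pn (p.1+p.2.1+p.2.2.1+p.2.2.2+3)],
    strictMono_of_vals _ (pn_lt (by omega)) (pn_lt (by omega)) (pn_lt (by omega))⟩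
  invFun s := ((s.1 0 : ℕ) - 1, (s.1 1 : ℕ) - (s.1 0 : ℕ) - 1,
    (s.1 2 : ℕ) - (s.1 1 : ℕ) - 1, (s.1 3 : ℕ) - (s.1 2 : ℕ) - 1)
  left_inv p := by
    obtain ⟨k1, k2, k3, k4⟩ := p
    show ((pn k1 : ℕ) - 1, (pn (k1+k2+1) : ℕ) - (pn k1 : ℕ) - 1,
      (pn (k1+k2+k3+2) : ℕ) - (pn (k1+k2+1) : ℕ) - 1,
      (pn (k1+k2+k3+k4+3) : ℕ) - (pn (k1+k2+k3+2) : ℕ) - 1) = (k1, k2, k3, k4)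
    simp only [pn_coe, Prod.mk.injEq]
    omega
  right_inv s := by
    obtain ⟨f, hf⟩ := s
    have h01 : (f 0 : ℕ) < (f 1 : ℕ) := (PNat.coe_lt_coe _ _).2 (hf (by decide))
    have h12 : (f 1 : ℕ) < (f 2 : ℕ) := (PNat.coe_lt_coe _ _).2 (hf (by decide))
    have h23 : (f 2 : ℕ) < (f 3 : ℕ) := (PNat.coe_lt_coe _ _).2 (hf (by decide))
    have h0 : 0 < (f 0 : ℕ) := (f 0).pos
    apply Subtype.ext
    funext i
    fin_cases i <;>
      · apply PNat.coe_injective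
        simp [pn_coe]
        omega

/-! Bridge from real tsums to `ℝ≥0∞` tsums. -/

lemma real_tsum_eq {ι : Type*} (f : ι → ℝ) (h : ∀ i, 0 ≤ f i) :
    ∑' i, f i = (∑' i, ENNReal.ofReal (f i)).toReal := by
  by_cases hs : Summable f
  · rw [← ENNReal.ofReal_tsum_of_nonneg h hs, ENNReal.toReal_ofReal (tsum_nonneg h)]
  · rw [tsum_eq_zero_of_not_summable hs]
    have htop : ∑' i, ENNReal.ofReal (f i) = ⊤ := by
      by_contra hne
      apply hs
      have hsum : Summable fun i => (f i).toNNReal := by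
        rw [← ENNReal.tsum_coe_ne_top_iff_summable]
        exact hne
      exact (NNReal.summable_coe.2 hsum).congr fun i => Real.coe_toNNReal _ (h i)
    rw [htop]
    simp

lemma mzv5_eq : mzv [5]
    = (∑' m : ℕ, (((m+1:ℕ) : ℝ≥0∞))⁻¹ * (((m+1:ℕ) : ℝ≥0∞))⁻¹ * (((m+1:ℕ) : ℝ≥0∞))⁻¹
        * (((m+1:ℕ) : ℝ≥0∞))⁻¹ * (q (m+1) 0 * (((m+1:ℕ) : ℝ≥0∞))⁻¹)).toReal := by
  calc mzv [5]
      = ∑' s : {f : Fin 1 → ℕ+ // StrictMono f}, (((s.1 0 : ℕ) : ℝ)^5)⁻¹ := by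
        rw [mzv]
        show ∑' s : {f : Fin 1 → ℕ+ // StrictMono f},
          ∏ i : Fin 1, (((s.1 i : ℕ) : ℝ) ^ ([5].get i))⁻¹ = _
        exact tsum_congr fun s => by rw [Fin.prod_univ_one]; rfl
    _ = ∑' m : ℕ, (((pn m : ℕ) : ℝ)^5)⁻¹ :=
        (Equiv.tsum_eq e1 (fun s => (((s.1 0 : ℕ) : ℝ)^5)⁻¹)).symm
    _ = ∑' m : ℕ, (((m+1:ℕ) : ℝ)^5)⁻¹ := tsum_congr fun m => by rw [pn_coe]
    _ = (∑' m : ℕ, ENNReal.ofReal ((((m+1:ℕ) : ℝ)^5)⁻¹)).toReal :=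
        real_tsum_eq _ (fun m => by positivity)
    _ = (∑' m : ℕ, (((m+1:ℕ) : ℝ≥0∞))⁻¹ * (((m+1:ℕ) : ℝ≥0∞))⁻¹ * (((m+1:ℕ) : ℝ≥0∞))⁻¹
        * (((m+1:ℕ) : ℝ≥0∞))⁻¹ * (q (m+1) 0 * (((m+1:ℕ) : ℝ≥0∞))⁻¹)).toReal := by
        congr 1
        refine tsum_congr fun m => ?_
        rw [ENNReal.ofReal_inv_of_pos (by positivity),
          ENNReal.ofReal_pow (by positivity), ENNReal.ofReal_natCast,
          ENNReal.inv_pow, q_zero, one_mul]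
        ring

lemma mzv1112_eq : mzv [1,1,1,2]
    = (∑' (k1 : ℕ) (k2 : ℕ) (k3 : ℕ) (k4 : ℕ),
          ((k1+1:ℕ) : ℝ≥0∞)⁻¹ * ((k1+k2+2:ℕ) : ℝ≥0∞)⁻¹ * ((k1+k2+k3+3:ℕ) : ℝ≥0∞)⁻¹
            * ((k1+k2+k3+k4+4:ℕ) : ℝ≥0∞)⁻¹ * ((k1+k2+k3+k4+4:ℕ) : ℝ≥0∞)⁻¹).toReal := by
  calc mzv [1,1,1,2]
      = ∑' s : {f : Fin 4 → ℕ+ // StrictMono f},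
          (((s.1 0 : ℕ) : ℝ))⁻¹ * (((s.1 1 : ℕ) : ℝ))⁻¹ * (((s.1 2 : ℕ) : ℝ))⁻¹
            * ((((s.1 3 : ℕ) : ℝ))^2)⁻¹ := by
        rw [mzv]
        show ∑' s : {f : Fin 4 → ℕ+ // StrictMono f},
          ∏ i : Fin 4, (((s.1 i : ℕ) : ℝ) ^ ([1,1,1,2].get i))⁻¹ = _
        refine tsum_congr fun s => ?_
        rw [Fin.prod_univ_four]
        norm_num
    _ = ∑' p : ℕ × ℕ × ℕ × ℕ,
          (((p.1+1:ℕ) : ℝ))⁻¹ * (((p.1+p.2.1+1+1:ℕ) : ℝ))⁻¹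
            * (((p.1+p.2.1+p.2.2.1+2+1:ℕ) : ℝ))⁻¹
            * ((((p.1+p.2.1+p.2.2.1+p.2.2.2+3+1:ℕ) : ℝ))^2)⁻¹ :=
        (Equiv.tsum_eq e4 (fun s => (((s.1 0 : ℕ) : ℝ))⁻¹ * (((s.1 1 : ℕ) : ℝ))⁻¹
          * (((s.1 2 : ℕ) : ℝ))⁻¹ * ((((s.1 3 : ℕ) : ℝ))^2)⁻¹)).symm
    _ = (∑' p : ℕ × ℕ × ℕ × ℕ, ENNReal.ofReal (
          (((p.1+1:ℕ) : ℝ))⁻¹ * (((p.1+p.2.1+1+1:ℕ) : ℝ))⁻¹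
            * (((p.1+p.2.1+p.2.2.1+2+1:ℕ) : ℝ))⁻¹
            * ((((p.1+p.2.1+p.2.2.1+p.2.2.2+3+1:ℕ) : ℝ))^2)⁻¹)).toReal :=
        real_tsum_eq _ (fun p => by positivity)
    _ = (∑' (k1 : ℕ) (k2 : ℕ) (k3 : ℕ) (k4 : ℕ), ENNReal.ofReal (
          (((k1+1:ℕ) : ℝ))⁻¹ * (((k1+k2+1+1:ℕ) : ℝ))⁻¹
            * (((k1+k2+k3+2+1:ℕ) : ℝ))⁻¹
            * ((((k1+k2+k3+k4+3+1:ℕ) : ℝ))^2)⁻¹)).toReal := by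
        congr 1
        rw [ENNReal.tsum_prod']
        refine tsum_congr fun k1 => ?_
        rw [ENNReal.tsum_prod']
        refine tsum_congr fun k2 => ?_
        rw [ENNReal.tsum_prod']
    _ = (∑' (k1 : ℕ) (k2 : ℕ) (k3 : ℕ) (k4 : ℕ),
          ((k1+1:ℕ) : ℝ≥0∞)⁻¹ * ((k1+k2+2:ℕ) : ℝ≥0∞)⁻¹ * ((k1+k2+k3+3:ℕ) : ℝ≥0∞)⁻¹
            * ((k1+k2+k3+k4+4:ℕ) : ℝ≥0∞)⁻¹ * ((k1+k2+k3+k4+4:ℕ) : ℝ≥0∞)⁻¹).toReal := by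
        congr 1
        refine tsum_congr fun k1 => tsum_congr fun k2 => tsum_congr fun k3 =>
          tsum_congr fun k4 => ?_
        rw [show k1+k2+1+1 = k1+k2+2 by omega,
          show k1+k2+k3+2+1 = k1+k2+k3+3 by omega,
          show k1+k2+k3+k4+3+1 = k1+k2+k3+k4+4 by omega,
          ENNReal.ofReal_mul (by positivity), ENNReal.ofReal_mul (by positivity),
          ENNReal.ofReal_mul (by positivity),
          ENNReal.ofReal_inv_of_pos (by positivity),
          ENNReal.ofReal_inv_of_pos (by positivity),
          ENNReal.ofReal_inv_of_pos (by positivity),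
          ENNReal.ofReal_inv_of_pos (by positivity),
          ENNReal.ofReal_pow (by positivity),
          ENNReal.ofReal_natCast, ENNReal.ofReal_natCast, ENNReal.ofReal_natCast,
          ENNReal.ofReal_natCast, ENNReal.inv_pow]
        ring

theorem mzv_rel_9 : mzv [5] = mzv [1,1,1,2] := by
  rw [mzv5_eq, mzv1112_eq, chain]
end

section
/- The weight-6 multiple zeta values satisfy 24ζ(1,5) = 12ζ(2,1,1,2) − 7ζ(1,1,1,1,2), 4ζ(2,4) = −4ζ(2,1,1,2) + 3ζ(1,1,1,1,2) (with sign convention: −4ζ(2,4) − 4ζ(2,1,1,2) + 3ζ(1,1,1,1,2) = 0), and ζ(4,2) = ζ(2,1,1,2). -/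
/-!
All series are summed in `ℝ≥0∞`, where they may be rearranged freely. Writing `A, B, G, C, Z`
for `ζ(1,5), ζ(2,4), ζ(3,3), ζ(4,2), ζ(6)`, three linear relations determine `A, B, C` from `Z`:
* stuffle and Euler decomposition of `ζ(3)²`: `Z + 2G = 12A + 6B + 2G`;
* stuffle and Euler decomposition of `ζ(2)ζ(4)`: `Z + B + C = 8A + 4B + 2G + C`;
* the depth-two sum formula `A + B + G + C = Z`.
The stuffle products split a double sum along the diagonal, the Euler decompositions are partial
fractions of `1/(mᵃkᵇ)` in powers of `1/(m+k)`, and the sum formula comes from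
`1/(mk) = (1/(m+k))(1/m + 1/k)` together with `∑_k 1/(k(m+k)) = H_m/m`.

The dualities `ζ(4,2) = ζ(2,1,1,2)` and `ζ(6) = ζ(1,1,1,1,2)` come from Seki–Yamamoto's
connected sums: the connector `m!n!/(m+n)!` lets a unit of weight move from one side to the
other, so each duality is a finite chain of such moves. Finiteness, needed to return to real
numbers, follows by comparison with `ζ(1,2) = ζ(3)`.
-/

open scoped ENNReal NNReal
open Filter Topology

namespace MultipleZeta

noncomputable def invPow (n k : ℕ) : ℝ≥0∞ := ((((n : ℝ≥0) ^ k)⁻¹ : ℝ≥0) : ℝ≥0∞)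

lemma invPow_ne_top (n k : ℕ) : invPow n k ≠ ⊤ := ENNReal.coe_ne_top

lemma toReal_invPow (n k : ℕ) : (invPow n k).toReal = ((n : ℝ) ^ k)⁻¹ := by
  simp [invPow]

lemma invPow_mul (n a b : ℕ) : invPow n a * invPow n b = invPow n (a + b) := by
  simp only [invPow, ← ENNReal.coe_mul, pow_add, mul_inv]

lemma invPow_one_pow (n k : ℕ) : invPow n 1 ^ k = invPow n k := by
  simp only [invPow, pow_one, ← ENNReal.coe_pow, inv_pow]

lemma invPow_succ_mul_natCast (m n : ℕ) (hm : 0 < m) : invPow m (n + 1) * m = invPow m n := by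
  have : (0 : ℝ) < m := by exact_mod_cast hm
  simp only [invPow]
  norm_cast
  rw [← NNReal.coe_inj]
  push_cast
  field_simp
  ring

lemma invPow_le_invPow {n j k : ℕ} (hn : 0 < n) (hjk : j ≤ k) : invPow n k ≤ invPow n j := by
  simp only [invPow, ENNReal.coe_le_coe]
  exact inv_anti₀ (by positivity) (pow_le_pow_right₀ (by exact_mod_cast hn) hjk)

/-! ### Rearranging series over the positive integers -/

lemma tsum_eq_of_telescoping {f c : ℕ → ℝ≥0∞} (hc : ∀ n, c n = f n + c (n + 1))
    (hlim : Tendsto c atTop (𝓝 0)) : ∑' n, f n = c 0 := by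
  have partial_sum : ∀ N, ∑ n ∈ Finset.range N, f n + c N = c 0 := by
    intro N
    induction N with
    | zero => simp
    | succ N ih => rw [Finset.sum_range_succ, add_assoc, ← hc, ih]
  have h := (ENNReal.tendsto_nat_tsum f).add hlim
  rw [add_zero] at h
  exact tendsto_nhds_unique h (by simp only [partial_sum, tendsto_const_nhds])

lemma tsum_ite_lt (x : ℕ) (h : ℕ → ℝ≥0∞) :
    ∑' a : ℕ+, (if x < (a : ℕ) then h a else 0) = ∑' n : ℕ+, h (x + n) := by
  set f : ℕ → ℝ≥0∞ := fun a => if x < a + 1 then h (a + 1) else 0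
  have hshift := (ENNReal.summable (f := fun n => f (n + x))).sum_add_tsum_nat_add'
  rw [Finset.sum_eq_zero fun i hi => if_neg (by simp at hi; omega), zero_add] at hshift
  rw [tsum_pnat_eq_tsum_succ (f := fun a => if x < a then h a else 0),
    tsum_pnat_eq_tsum_succ (f := fun n => h (x + n))]
  refine hshift.symm.trans (tsum_congr fun n => ?_)
  simp only [f, if_pos (show x < n + x + 1 by omega)]
  ring_nf

lemma tsum_ite_le (a : ℕ+) (g : ℕ → ℝ≥0∞) :
    ∑' m : ℕ+, (if (a : ℕ) ≤ m then g m else 0) = g a + ∑' b : ℕ+, g (a + b) := by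
  have hsplit : ∀ m : ℕ+, (if (a : ℕ) ≤ m then g m else 0)
      = (if m = a then g m else 0) + if (a : ℕ) < m then g m else 0 := by
    intro m
    rcases lt_trichotomy m a with h | rfl | h
    · simp [h.ne, not_le.mpr (PNat.coe_lt_coe _ _ |>.mpr h),
        not_lt.mpr (PNat.coe_le_coe _ _ |>.mpr h.le)]
    · simp
    · simp [h.ne', (PNat.coe_lt_coe _ _ |>.mpr h).le, PNat.coe_lt_coe _ _ |>.mpr h]
  rw [tsum_congr hsplit, ENNReal.tsum_add, tsum_ite_eq, tsum_ite_lt]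

lemma tsum_tsum_eq_diag_add_lt_add_gt (f : ℕ → ℕ → ℝ≥0∞) :
    ∑' (m : ℕ+) (n : ℕ+), f m n
      = ∑' m : ℕ+, f m m + ∑' (m : ℕ+) (y : ℕ+), f m (m + y)
        + ∑' (n : ℕ+) (y : ℕ+), f (n + y) n := by
  have trichotomy : ∀ m n : ℕ+, f m n = (if n = m then f m n else 0)
      + (if (m : ℕ) < n then f m n else 0) + (if (n : ℕ) < m then f m n else 0) := by
    intro m n
    rcases lt_trichotomy m n with h | rfl | h
    · simp [h, h.ne', not_lt.mpr h.le]
    · simp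
    · simp [h, h.ne, not_lt.mpr h.le]
  rw [tsum_congr fun m => tsum_congr fun n => trichotomy m n]
  simp only [ENNReal.tsum_add, tsum_ite_eq, tsum_ite_lt]
  rw [ENNReal.tsum_comm (f := fun m n : ℕ+ => if (n : ℕ) < m then f m n else 0)]
  congr 1
  exact tsum_congr fun n => tsum_ite_lt n fun m => f m n

/-! ### Nested sums -/

/-- `nestedSum w ks x = ∑_{x < m₁ < ⋯ < m_r} m₁^{-k₁} ⋯ m_r^{-k_r} w(m_r)` (read `w x` when
`r = 0`), summed over the gaps `mᵢ₊₁ - mᵢ`. -/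
noncomputable def nestedSum (w : ℕ → ℝ≥0∞) : List ℕ → ℕ → ℝ≥0∞
  | [], x => w x
  | k :: ks, x => ∑' n : ℕ+, invPow (x + n) k * nestedSum w ks (x + n)

noncomputable def emzv (ks : List ℕ) : ℝ≥0∞ := nestedSum (fun _ => 1) ks 0

lemma nestedSum_singleton (w : ℕ → ℝ≥0∞) (k x : ℕ) :
    nestedSum w [k] x = ∑' n : ℕ+, invPow (x + n) k * w (x + n) := rfl

lemma nestedSum_append (w : ℕ → ℝ≥0∞) (ks ls : List ℕ) (x : ℕ) :
    nestedSum w (ks ++ ls) x = nestedSum (nestedSum w ls) ks x := by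
  induction ks generalizing x with
  | nil => rfl
  | cons k ks ih => simp only [List.cons_append, nestedSum, ih]

lemma nestedSum_const_mul (c : ℝ≥0∞) (w : ℕ → ℝ≥0∞) (ks : List ℕ) (x : ℕ) :
    nestedSum (fun m => c * w m) ks x = c * nestedSum w ks x := by
  induction ks generalizing x with
  | nil => rfl
  | cons k ks ih => simp only [nestedSum, ih, ← ENNReal.tsum_mul_left, mul_left_comm c]

lemma nestedSum_tsum {ι : Type*} (w : ι → ℕ → ℝ≥0∞) (ks : List ℕ) (x : ℕ) :
    nestedSum (fun m => ∑' i, w i m) ks x = ∑' i, nestedSum (w i) ks x := by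
  induction ks generalizing x with
  | nil => rfl
  | cons k ks ih =>
    simp only [nestedSum, ih, ← ENNReal.tsum_mul_left]
    exact ENNReal.tsum_comm

lemma nestedSum_comm (w : ℕ → ℕ → ℝ≥0∞) (ks ls : List ℕ) (x y : ℕ) :
    nestedSum (fun m => nestedSum (w m) ls y) ks x
      = nestedSum (fun n => nestedSum (fun m => w m n) ks x) ls y := by
  induction ks generalizing x with
  | nil => rfl
  | cons k ks ih => simp only [nestedSum, ih, nestedSum_tsum, nestedSum_const_mul]

lemma emzv_singleton (p : ℕ) : emzv [p] = ∑' a : ℕ+, invPow a p := by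
  simp [emzv, nestedSum]

lemma emzv_pair (p q : ℕ) :
    emzv [p, q] = ∑' a : ℕ+, invPow a p * ∑' b : ℕ+, invPow (a + b) q := by
  simp [emzv, nestedSum]

lemma tsum_strictMono_eq_nestedSum (ks : List ℕ) (x : ℕ) :
    ∑' f : Fin ks.length → ℕ+,
        (if StrictMono f ∧ ∀ i, x < (f i : ℕ) then ∏ i, invPow (f i) (ks.get i) else 0)
      = nestedSum (fun _ => 1) ks x := by
  induction ks generalizing x with
  | nil => simp [nestedSum, StrictMono]
  | cons k ks ih =>
    change ∑' f : Fin (ks.length + 1) → ℕ+, (if StrictMono f ∧ ∀ i, x < (f i : ℕ)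
      then ∏ i, invPow (f i) ((k :: ks).get i) else 0) = _
    rw [← (Fin.consEquiv fun _ => ℕ+).tsum_eq]
    simp only [ENNReal.tsum_prod', Fin.consEquiv, Equiv.coe_fn_mk, Fin.strictMono_cons,
      Fin.forall_fin_succ, Fin.cons_zero, Fin.cons_succ, Fin.prod_univ_succ]
    rw [nestedSum, ← tsum_ite_lt x fun m => invPow m k * nestedSum (fun _ => 1) ks m]
    refine tsum_congr fun a => ?_
    by_cases hxa : x < (a : ℕ)
    · have hcond : ∀ b : Fin ks.length → ℕ+, ((∀ j, a < b j) ∧ StrictMono b) ∧ x < (a : ℕ) ∧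
          (∀ i, x < (b i : ℕ)) ↔ StrictMono b ∧ ∀ i, (a : ℕ) < b i := fun b =>
        ⟨fun h => ⟨h.1.2, h.1.1⟩, fun h => ⟨⟨h.2, h.1⟩, hxa, fun i => hxa.trans (h.2 i)⟩⟩
      simp only [hcond, if_pos hxa, ← ih, ← ENNReal.tsum_mul_left, mul_ite, mul_zero]
      rfl
    · simp [hxa]

theorem mzv_eq_toReal_emzv (ks : List ℕ) : mzv ks = (emzv ks).toReal := by
  have hsum : ∑' f : {f : Fin ks.length → ℕ+ // StrictMono f}, ∏ i, invPow (f.1 i) (ks.get i)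
      = emzv ks := by
    rw [emzv, ← tsum_strictMono_eq_nestedSum]
    refine (tsum_subtype {f : Fin ks.length → ℕ+ | StrictMono f}
      fun f => ∏ i, invPow (f i) (ks.get i)).trans ?_
    simp [Set.indicator_apply]
  rw [mzv, ← hsum,
    ENNReal.tsum_toReal_eq fun f => ENNReal.prod_ne_top fun i _ => invPow_ne_top _ _]
  simp [ENNReal.toReal_prod, toReal_invPow]

/-! ### Connected sums and duality -/

/-- The connector `m! n! / (m + n)!` of connected sums. -/
noncomputable def binomWeight (m n : ℕ) : ℝ≥0∞ := ((((m + n).choose n : ℝ≥0))⁻¹ : ℝ≥0)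

lemma binomWeight_comm (m n : ℕ) : binomWeight m n = binomWeight n m := by
  rw [binomWeight, binomWeight, add_comm m n, Nat.choose_symm_add]

lemma binomWeight_zero_left (n : ℕ) : binomWeight 0 n = 1 := by simp [binomWeight]

lemma binomWeight_zero_right (m : ℕ) : binomWeight m 0 = 1 := by simp [binomWeight]

lemma binomWeight_one (a : ℕ) : binomWeight a 1 = invPow (a + 1) 1 := by
  simp [binomWeight, invPow]

lemma binomWeight_le (a y : ℕ) (hy : 0 < y) : binomWeight a y ≤ ((a + 1 : ℕ) : ℝ≥0∞)⁻¹ := by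
  have hle : a + 1 ≤ (a + y).choose y := by
    rw [← Nat.choose_symm_add, ← Nat.choose_succ_self_right]
    exact Nat.choose_le_choose a (by omega)
  rw [binomWeight, ← ENNReal.coe_natCast, ← ENNReal.coe_inv (by positivity)]
  exact ENNReal.coe_le_coe.mpr (inv_anti₀ (by positivity) (by exact_mod_cast hle))

lemma invPow_mul_binomWeight_eq_add_succ (a y : ℕ) (hy : 0 < y) :
    invPow y 1 * binomWeight a y
      = invPow (a + 1) 1 * binomWeight (a + 1) y + invPow y 1 * binomWeight (a + 1) y := by
  have key : ((a + y).choose y * (a + 1 + y) : ℝ) = (a + 1 + y).choose y * (a + 1) := by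
    have := Nat.choose_mul_succ_eq (a + y) y
    rw [show a + y + 1 - y = a + 1 by omega, show a + y + 1 = a + 1 + y by omega] at this
    exact_mod_cast this
  have : (0 : ℝ) < (a + y).choose y := by exact_mod_cast Nat.choose_pos (by omega)
  have : (0 : ℝ) < (a + 1 + y).choose y := by exact_mod_cast Nat.choose_pos (by omega)
  have : (0 : ℝ) < y := by exact_mod_cast hy
  simp only [invPow, binomWeight]
  norm_cast
  rw [← NNReal.coe_inj]
  push_cast
  field_simp
  linear_combination -key

/-- Seki–Yamamoto's transport relation. -/
lemma tsum_invPow_one_mul_binomWeight (x y : ℕ) (hy : 0 < y) :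
    ∑' j : ℕ+, invPow (x + j) 1 * binomWeight (x + j) y = invPow y 1 * binomWeight x y := by
  rw [tsum_pnat_eq_tsum_succ (f := fun j => invPow (x + j) 1 * binomWeight (x + j) y)]
  refine tsum_eq_of_telescoping (c := fun n => invPow y 1 * binomWeight (x + n) y)
    (fun n => by simpa [add_assoc] using invPow_mul_binomWeight_eq_add_succ (x + n) y hy) ?_
  have hweight : Tendsto (fun n => binomWeight (x + n) y) atTop (𝓝 0) := by
    refine tendsto_of_tendsto_of_tendsto_of_le_of_le tendsto_const_nhds
      ENNReal.tendsto_inv_nat_nhds_zero (fun _ => zero_le) fun n => ?_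
    refine (binomWeight_le (x + n) y hy).trans (ENNReal.inv_le_inv.mpr ?_)
    exact_mod_cast (show n ≤ x + n + 1 by omega)
  simpa using ENNReal.Tendsto.const_mul hweight (Or.inr (invPow_ne_top y 1))

/-- The connected sum `∑ m₁^{-k₁} ⋯ m_r^{-k_r} · binomWeight m_r n_s · n₁^{-l₁} ⋯ n_s^{-l_s}`
over `0 < m₁ < ⋯ < m_r` and `0 < n₁ < ⋯ < n_s`, where `m_r = 0` if `r = 0` and `n_s = 0`
if `s = 0`. -/
noncomputable def connSum (ks ls : List ℕ) : ℝ≥0∞ :=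
  nestedSum (fun m => nestedSum (binomWeight m) ls 0) ks 0

lemma connSum_comm (ks ls : List ℕ) : connSum ks ls = connSum ls ks := by
  rw [connSum, connSum, nestedSum_comm]
  simp only [binomWeight_comm]

lemma connSum_nil_right (ks : List ℕ) : connSum ks [] = emzv ks := by
  simp only [connSum, nestedSum, binomWeight_zero_right, emzv]

lemma connSum_nil_left (ls : List ℕ) : connSum [] ls = emzv ls := by
  rw [connSum, nestedSum, emzv, show binomWeight 0 = fun _ => 1 from funext binomWeight_zero_left]

lemma connSum_append_succ (ks : List ℕ) (k : ℕ) (ls : List ℕ) :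
    connSum (ks ++ [k + 1]) ls = connSum (ks ++ [k]) (ls ++ [1]) := by
  simp only [connSum, nestedSum_append]
  congr 1
  funext x
  simp only [nestedSum_singleton]
  refine tsum_congr fun n => ?_
  have transport : nestedSum (binomWeight (x + n)) [1]
      = fun b => invPow (x + n) 1 * binomWeight (x + n) b := by
    funext b
    rw [nestedSum_singleton, binomWeight_comm (x + n) b,
      ← tsum_invPow_one_mul_binomWeight b _ (by positivity)]
    simp only [binomWeight_comm]
  simp only [transport, nestedSum_const_mul, ← mul_assoc, invPow_mul]

lemma connSum_append_one (ks ls : List ℕ) (l : ℕ) :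
    connSum (ks ++ [1]) (ls ++ [l]) = connSum ks (ls ++ [l + 1]) := by
  rw [connSum_comm, ← connSum_append_succ, connSum_comm]

lemma emzv_one_two : emzv [1, 2] = emzv [3] :=
  calc emzv [1, 2] = connSum [] [1, 2] := (connSum_nil_left _).symm
    _ = connSum [1] [1, 1] := (connSum_append_one [] [1] 1).symm
    _ = connSum [2] [1] := (connSum_append_succ [] 1 [1]).symm
    _ = connSum [3] [] := (connSum_append_succ [] 2 []).symm
    _ = emzv [3] := connSum_nil_right _

lemma emzv_four_two : emzv [4, 2] = emzv [2, 1, 1, 2] :=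
  calc emzv [4, 2] = connSum [4, 2] [] := (connSum_nil_right _).symm
    _ = connSum [4, 1] [1] := connSum_append_succ [4] 1 []
    _ = connSum [4] [2] := connSum_append_one [4] [] 1
    _ = connSum [3] [2, 1] := connSum_append_succ [] 3 [2]
    _ = connSum [2] [2, 1, 1] := connSum_append_succ [] 2 [2, 1]
    _ = connSum [1] [2, 1, 1, 1] := connSum_append_succ [] 1 [2, 1, 1]
    _ = connSum [] [2, 1, 1, 2] := connSum_append_one [] [2, 1, 1] 1
    _ = emzv [2, 1, 1, 2] := connSum_nil_left _

lemma emzv_six : emzv [6] = emzv [1, 1, 1, 1, 2] :=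
  calc emzv [6] = connSum [6] [] := (connSum_nil_right _).symm
    _ = connSum [5] [1] := connSum_append_succ [] 5 []
    _ = connSum [4] [1, 1] := connSum_append_succ [] 4 [1]
    _ = connSum [3] [1, 1, 1] := connSum_append_succ [] 3 [1, 1]
    _ = connSum [2] [1, 1, 1, 1] := connSum_append_succ [] 2 [1, 1, 1]
    _ = connSum [1] [1, 1, 1, 1, 1] := connSum_append_succ [] 1 [1, 1, 1, 1]
    _ = connSum [] [1, 1, 1, 1, 2] := connSum_append_one [] [1, 1, 1, 1] 1
    _ = emzv [1, 1, 1, 1, 2] := connSum_nil_left _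

/-! ### Stuffle products and Euler decompositions -/

lemma emzv_singleton_mul_singleton_eq_tsum (p q : ℕ) :
    emzv [p] * emzv [q] = ∑' (m : ℕ+) (k : ℕ+), invPow m p * invPow k q := by
  rw [emzv_singleton, emzv_singleton, ← ENNReal.tsum_mul_right]
  simp_rw [← ENNReal.tsum_mul_left]

theorem emzv_singleton_mul_singleton (p q : ℕ) :
    emzv [p] * emzv [q] = emzv [p + q] + emzv [p, q] + emzv [q, p] := by
  rw [emzv_singleton_mul_singleton_eq_tsum,
    tsum_tsum_eq_diag_add_lt_add_gt fun m n => invPow m p * invPow n q]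
  simp only [emzv_singleton, emzv_pair, invPow_mul, ← ENNReal.tsum_mul_left]
  congr 1
  exact tsum_congr fun n => tsum_congr fun y => mul_comm _ _

lemma tsum_tsum_invPow_mul_invPow_add_left (p q : ℕ) :
    ∑' (m : ℕ+) (k : ℕ+), invPow k p * invPow (m + k) q = emzv [p, q] := by
  rw [ENNReal.tsum_comm, emzv_pair]
  simp_rw [add_comm _ (_ : ℕ), ENNReal.tsum_mul_left]

lemma invPow_three_mul_invPow_three (m k : ℕ) (hm : 0 < m) (hk : 0 < k) :
    invPow m 3 * invPow k 3
      = 6 * (invPow m 1 * invPow (m + k) 5) + 3 * (invPow m 2 * invPow (m + k) 4)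
        + invPow m 3 * invPow (m + k) 3
        + 6 * (invPow k 1 * invPow (m + k) 5) + 3 * (invPow k 2 * invPow (m + k) 4)
        + invPow k 3 * invPow (m + k) 3 := by
  have : (0 : ℝ) < m := by exact_mod_cast hm
  have : (0 : ℝ) < k := by exact_mod_cast hk
  simp only [invPow]
  norm_cast
  rw [← NNReal.coe_inj]
  push_cast
  field_simp
  ring

lemma invPow_two_mul_invPow_four (m k : ℕ) (hm : 0 < m) (hk : 0 < k) :
    invPow m 2 * invPow k 4
      = 4 * (invPow m 1 * invPow (m + k) 5) + invPow m 2 * invPow (m + k) 4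
        + 4 * (invPow k 1 * invPow (m + k) 5) + 3 * (invPow k 2 * invPow (m + k) 4)
        + 2 * (invPow k 3 * invPow (m + k) 3) + invPow k 4 * invPow (m + k) 2 := by
  have : (0 : ℝ) < m := by exact_mod_cast hm
  have : (0 : ℝ) < k := by exact_mod_cast hk
  simp only [invPow]
  norm_cast
  rw [← NNReal.coe_inj]
  push_cast
  field_simp
  ring

theorem emzv_three_mul_three :
    emzv [3] * emzv [3] = 2 * (6 * emzv [1, 5] + 3 * emzv [2, 4] + emzv [3, 3]) := by
  rw [emzv_singleton_mul_singleton_eq_tsum, tsum_congr fun m : ℕ+ => tsum_congr fun k : ℕ+ =>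
    invPow_three_mul_invPow_three m k m.pos k.pos]
  simp only [ENNReal.tsum_add, ENNReal.tsum_mul_left, ← emzv_pair,
    tsum_tsum_invPow_mul_invPow_add_left]
  ring

theorem emzv_two_mul_four :
    emzv [2] * emzv [4] = 8 * emzv [1, 5] + 4 * emzv [2, 4] + 2 * emzv [3, 3] + emzv [4, 2] := by
  rw [emzv_singleton_mul_singleton_eq_tsum, tsum_congr fun m : ℕ+ => tsum_congr fun k : ℕ+ =>
    invPow_two_mul_invPow_four m k m.pos k.pos]
  simp only [ENNReal.tsum_add, ENNReal.tsum_mul_left, ← emzv_pair,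
    tsum_tsum_invPow_mul_invPow_add_left]
  ring

/-! ### The depth-two sum formula -/

/-- Applied with `x = 1/m`, `y = 1/(m+k)`, `z = 1/k`, for which `h` reads
`1/(mk) = (1/(m+k))(1/m + 1/k)`. -/
lemma sum_pow_mul_pow_add_mul_pow {R : Type*} [CommSemiring R] {x y z : R}
    (h : x * z = y * (x + z)) (n e : ℕ) :
    ∑ j ∈ Finset.range n, x ^ (j + 1) * y ^ (n + e - j) + z * y ^ (n + e) = x ^ n * y ^ e * z := by
  induction n generalizing e with
  | zero => simp [mul_comm]
  | succ n ih =>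
    have hexp : ∀ j ∈ Finset.range n, n + 1 + e - j = n + (e + 1) - j := fun j _ => by omega
    rw [Finset.sum_range_succ, Finset.sum_congr rfl fun j hj => by rw [hexp j hj],
      show n + 1 + e - n = e + 1 by omega, show n + 1 + e = n + (e + 1) by omega,
      add_right_comm, ih (e + 1)]
    calc x ^ n * y ^ (e + 1) * z + x ^ (n + 1) * y ^ (e + 1)
        = x ^ n * y ^ e * (y * (x + z)) := by ring
      _ = x ^ (n + 1) * y ^ e * z := by rw [← h]; ring

lemma invPow_one_mul_invPow_one (m k : ℕ) (hm : 0 < m) (hk : 0 < k) :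
    invPow m 1 * invPow k 1 = invPow (m + k) 1 * (invPow m 1 + invPow k 1) := by
  have : (0 : ℝ) < m := by exact_mod_cast hm
  have : (0 : ℝ) < k := by exact_mod_cast hk
  simp only [invPow]
  norm_cast
  rw [← NNReal.coe_inj]
  push_cast
  field_simp
  ring

lemma natCast_succ_mul_invPow_mul_invPow (m k : ℕ) (hk : 0 < k) :
    ((m + 1 : ℕ) : ℝ≥0∞) * (invPow k 1 * invPow (m + 1 + k) 1)
      = m * (invPow k 1 * invPow (m + k) 1) + invPow (m + k) 1 * invPow (m + k + 1) 1 := by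
  have : (0 : ℝ) < k := by exact_mod_cast hk
  simp only [invPow]
  norm_cast
  rw [← NNReal.coe_inj]
  push_cast
  field_simp
  ring

/-- The right-hand side is the harmonic number `H_m`. -/
lemma natCast_mul_tsum_invPow_mul_invPow_add (m : ℕ) :
    (m : ℝ≥0∞) * ∑' k : ℕ+, invPow k 1 * invPow (m + k) 1
      = ∑' a : ℕ+, if (a : ℕ) ≤ m then invPow a 1 else 0 := by
  induction m with
  | zero => simp
  | succ m ih =>
    have telescoping :
        ∑' k : ℕ+, invPow (m + k) 1 * invPow (m + k + 1) 1 = invPow (m + 1) 1 := by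
      simpa [binomWeight_one, invPow] using tsum_invPow_one_mul_binomWeight m 1 one_pos
    have hsplit : ∀ a : ℕ+, (if (a : ℕ) ≤ m + 1 then invPow a 1 else 0)
        = (if (a : ℕ) ≤ m then invPow a 1 else 0) + if a = m.succPNat then invPow a 1 else 0 := by
      intro a
      rcases lt_trichotomy (a : ℕ) (m + 1) with h | h | h
      · simp [h.le, Nat.le_of_lt_succ h, show a ≠ m.succPNat from fun e => by simp [e] at h]
      · simp [show a = m.succPNat from PNat.coe_injective h]
      · simp [show ¬ (a : ℕ) ≤ m + 1 by omega, show ¬ (a : ℕ) ≤ m by omega,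
          show a ≠ m.succPNat from fun e => by simp [e] at h]
    rw [← ENNReal.tsum_mul_left,
      tsum_congr fun k : ℕ+ => natCast_succ_mul_invPow_mul_invPow m k k.pos,
      ENNReal.tsum_add, ENNReal.tsum_mul_left, ih, telescoping, tsum_congr hsplit,
      ENNReal.tsum_add, tsum_ite_eq]
    rfl

lemma tsum_invPow_mul_tsum_invPow_mul_invPow_add (n : ℕ) :
    ∑' m : ℕ+, invPow m n * ∑' k : ℕ+, invPow k 1 * invPow (m + k) 1
      = emzv [1, n + 1] + emzv [n + 2] := by
  calc ∑' m : ℕ+, invPow m n * ∑' k : ℕ+, invPow k 1 * invPow (m + k) 1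
      = ∑' m : ℕ+, invPow m (n + 1) * ∑' a : ℕ+, if (a : ℕ) ≤ m then invPow a 1 else 0 := by
        refine tsum_congr fun m => ?_
        rw [← natCast_mul_tsum_invPow_mul_invPow_add, ← mul_assoc,
          invPow_succ_mul_natCast m n m.pos]
    _ = ∑' a : ℕ+, invPow a 1 * (invPow a (n + 1) + ∑' b : ℕ+, invPow (a + b) (n + 1)) := by
        simp_rw [← ENNReal.tsum_mul_left, mul_ite, mul_zero]
        rw [ENNReal.tsum_comm]
        refine tsum_congr fun a => ?_
        rw [← tsum_ite_le a fun m => invPow m (n + 1), ← ENNReal.tsum_mul_left]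
        refine tsum_congr fun m => ?_
        split_ifs <;> simp [mul_comm]
    _ = emzv [1, n + 1] + emzv [n + 2] := by
        simp only [mul_add, ENNReal.tsum_add, invPow_mul, emzv_pair, emzv_singleton]
        rw [add_comm, add_comm 1]

theorem emzv_sum_formula (n : ℕ) :
    ∑ j ∈ Finset.range n, emzv [j + 1, n + 1 - j] + emzv [1, n + 1]
      = emzv [1, n + 1] + emzv [n + 2] := by
  have pointwise : ∀ m k : ℕ+,
      ∑ j ∈ Finset.range n, invPow m (j + 1) * invPow (m + k) (n + 1 - j)
        + invPow k 1 * invPow (m + k) (n + 1) = invPow m n * (invPow k 1 * invPow (m + k) 1) := by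
    intro m k
    have := sum_pow_mul_pow_add_mul_pow (invPow_one_mul_invPow_one m k m.pos k.pos) n 1
    simp only [invPow_one_pow, pow_one] at this
    rw [this]
    ring
  rw [← tsum_invPow_mul_tsum_invPow_mul_invPow_add]
  simp_rw [← ENNReal.tsum_mul_left, ← pointwise, ENNReal.tsum_add]
  rw [tsum_tsum_invPow_mul_invPow_add_left,
    tsum_congr fun m : ℕ+ => Summable.tsum_finsetSum fun _ _ => ENNReal.summable,
    Summable.tsum_finsetSum fun _ _ => ENNReal.summable]
  simp_rw [ENNReal.tsum_mul_left, ← emzv_pair]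

/-! ### Finiteness -/

lemma emzv_singleton_ne_top {k : ℕ} (hk : 2 ≤ k) : emzv [k] ≠ ⊤ := by
  rw [emzv_singleton]
  refine ENNReal.tsum_coe_ne_top_iff_summable.mpr (NNReal.summable_coe.mp ?_)
  push_cast
  exact (Real.summable_nat_pow_inv.mpr hk).comp_injective PNat.coe_injective

lemma emzv_pair_ne_top {p q : ℕ} (hp : 1 ≤ p) (hq : 2 ≤ q) : emzv [p, q] ≠ ⊤ := by
  refine ne_top_of_le_ne_top (b := emzv [1, 2])
    (by rw [emzv_one_two]; exact emzv_singleton_ne_top (by norm_num)) ?_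
  rw [emzv_pair, emzv_pair]
  exact ENNReal.tsum_le_tsum fun a => mul_le_mul' (invPow_le_invPow a.pos hp)
    (ENNReal.tsum_le_tsum fun b => invPow_le_invPow (by positivity) hq)

end MultipleZeta

open MultipleZeta

theorem mzv_rel_18 :
    24 * mzv [1,5] = 12 * mzv [2,1,1,2] - 7 * mzv [1,1,1,1,2] ∧
    -4 * mzv [2,4] - 4 * mzv [2,1,1,2] + 3 * mzv [1,1,1,1,2] = 0 ∧
    mzv [4,2] = mzv [2,1,1,2] := by
  have h33 := (emzv_singleton_mul_singleton 3 3).symm.trans emzv_three_mul_three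
  have h24 := (emzv_singleton_mul_singleton 2 4).symm.trans emzv_two_mul_four
  have hsum := emzv_sum_formula 4
  simp only [Finset.sum_range_succ, Finset.sum_range_zero, zero_add] at hsum
  have fin6 : emzv [6] ≠ ⊤ := emzv_singleton_ne_top (by norm_num)
  have fin15 : emzv [1, 5] ≠ ⊤ := emzv_pair_ne_top le_rfl (by norm_num)
  have fin24 : emzv [2, 4] ≠ ⊤ := emzv_pair_ne_top (by norm_num) (by norm_num)
  have fin33 : emzv [3, 3] ≠ ⊤ := emzv_pair_ne_top (by norm_num) (by norm_num)
  have fin42 : emzv [4, 2] ≠ ⊤ := emzv_pair_ne_top (by norm_num) le_rfl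
  apply_fun ENNReal.toReal at h33 h24 hsum
  simp [ENNReal.toReal_add, ENNReal.mul_ne_top, fin6, fin15, fin24, fin33, fin42] at h33 h24 hsum
  refine ⟨?_, ?_, by rw [mzv_eq_toReal_emzv, mzv_eq_toReal_emzv, emzv_four_two]⟩ <;>
  · simp only [mzv_eq_toReal_emzv, ← emzv_four_two, ← emzv_six]
    linarith
end
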